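/- arXiv:2502.01358 — 6 statements merged into one kernel-verified Lean document; each statement's English description precedes it below -/
import Mathlib

section
/- For every fixed x ∈ ℝ^d, the mapping t ↦ prox_{tG}(x) is continuous on the interval (0, t_max); that is, if t_n → t ∈ (0, t_max), then prox_{t_n G}(x) → prox_{tG}(x). -/
open Set Filter Topology

/-- For every fixed `x`, the mapping `t ↦ prox_{tG}(x)` is continuous on
`(0, t_max)`. Here `P t` denotes the (unique) proximal point of `G` at `x` with
parameter `t`. -/
theorem prox_time_continuous {d : ℕ}
    (G : EuclideanSpace ℝ (Fin d) → ℝ)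
    (hGcont : Continuous G)
    (hGcoercive : ∀ r : ℝ, ∃ R : ℝ, ∀ y : EuclideanSpace ℝ (Fin d), R ≤ ‖y‖ → r ≤ G y)
    (hGbddBelow : ∃ m : ℝ, ∀ y : EuclideanSpace ℝ (Fin d), m ≤ G y)
    (tmax : ℝ) (htmax : 0 < tmax)
    (x : EuclideanSpace ℝ (Fin d))
    (P : ℝ → EuclideanSpace ℝ (Fin d))
    (hPmin : ∀ t ∈ Set.Ioo (0 : ℝ) tmax, ∀ y : EuclideanSpace ℝ (Fin d),
      G (P t) + ‖x - P t‖ ^ 2 / (2 * t) ≤ G y + ‖x - y‖ ^ 2 / (2 * t))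
    (hPuniq : ∀ t ∈ Set.Ioo (0 : ℝ) tmax, ∀ q : EuclideanSpace ℝ (Fin d),
      (∀ y : EuclideanSpace ℝ (Fin d),
        G q + ‖x - q‖ ^ 2 / (2 * t) ≤ G y + ‖x - y‖ ^ 2 / (2 * t)) → q = P t) :
    ContinuousOn P (Set.Ioo (0 : ℝ) tmax) := by
  obtain ⟨m, hm⟩ := hGbddBelow
  set R : ℝ := Real.sqrt (2 * tmax * (G x - m)) with hRdef
  have hGxm : 0 ≤ G x - m := by linarith [hm x]
  have hbound : ∀ s ∈ Set.Ioo (0 : ℝ) tmax, ‖x - P s‖ ≤ R := by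
    intro s hs
    have h1 := hPmin s hs x
    have hxx : ‖x - x‖ = 0 := by simp
    rw [sub_self, norm_zero] at h1
    simp only [ne_eq, OfNat.ofNat_ne_zero, not_false_eq_true, zero_pow, zero_div,
      add_zero] at h1
    have hs0 : 0 < s := hs.1
    have h2 : ‖x - P s‖ ^ 2 / (2 * s) ≤ G x - m := by
      have := hm (P s); linarith
    have h3 : ‖x - P s‖ ^ 2 ≤ 2 * s * (G x - m) := by
      have h2s : 0 < 2 * s := by linarith
      calc ‖x - P s‖ ^ 2 = ‖x - P s‖ ^ 2 / (2 * s) * (2 * s) := by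
            field_simp
        _ ≤ (G x - m) * (2 * s) := by
            exact mul_le_mul_of_nonneg_right h2 h2s.le
        _ = 2 * s * (G x - m) := by ring
    have h4 : ‖x - P s‖ ^ 2 ≤ 2 * tmax * (G x - m) := by
      have : 2 * s * (G x - m) ≤ 2 * tmax * (G x - m) := by
        apply mul_le_mul_of_nonneg_right _ hGxm
        linarith [hs.2]
      linarith
    rw [hRdef]
    rw [show ‖x - P s‖ = Real.sqrt (‖x - P s‖ ^ 2) by
      rw [Real.sqrt_sq (norm_nonneg _)]]
    exact Real.sqrt_le_sqrt h4
  intro t ht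
  have ht0 : 0 < t := ht.1
  rw [ContinuousWithinAt]
  apply Filter.tendsto_of_subseq_tendsto
  intro ns hns
  have hns_mem : ∀ᶠ n in atTop, ns n ∈ Set.Ioo (0 : ℝ) tmax :=
    hns.eventually self_mem_nhdsWithin
  have hns_t : Tendsto ns atTop (𝓝 t) := hns.mono_right nhdsWithin_le_nhds
  -- extract convergent subsequence of P ∘ ns
  have hcomp : IsCompact (Metric.closedBall x R) := isCompact_closedBall x R
  have hfreq : ∃ᶠ n in atTop, P (ns n) ∈ Metric.closedBall x R := by
    apply Eventually.frequently
    filter_upwards [hns_mem] with n hn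
    rw [Metric.mem_closedBall, dist_comm, dist_eq_norm]
    exact hbound (ns n) hn
  obtain ⟨q, hq_mem, φ, hφ, hq_tendsto⟩ := hcomp.tendsto_subseq' hfreq
  have hsk_mem : ∀ᶠ k in atTop, ns (φ k) ∈ Set.Ioo (0 : ℝ) tmax :=
    hφ.tendsto_atTop.eventually hns_mem
  have hsk_t : Tendsto (fun k => ns (φ k)) atTop (𝓝 t) :=
    hns_t.comp hφ.tendsto_atTop
  -- q is a minimizer at t
  have h2t : (2 : ℝ) * t ≠ 0 := by positivity
  have h2sk : Tendsto (fun k => 2 * ns (φ k)) atTop (𝓝 (2 * t)) :=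
    hsk_t.const_mul 2
  have hq_min : ∀ y : EuclideanSpace ℝ (Fin d),
      G q + ‖x - q‖ ^ 2 / (2 * t) ≤ G y + ‖x - y‖ ^ 2 / (2 * t) := by
    intro y
    have hle : ∀ᶠ k in atTop,
        G (P (ns (φ k))) + ‖x - P (ns (φ k))‖ ^ 2 / (2 * ns (φ k)) ≤
          G y + ‖x - y‖ ^ 2 / (2 * ns (φ k)) := by
      filter_upwards [hsk_mem] with k hk
      exact hPmin _ hk y
    have hLHS : Tendsto (fun k => G (P (ns (φ k))) +
        ‖x - P (ns (φ k))‖ ^ 2 / (2 * ns (φ k))) atTop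
        (𝓝 (G q + ‖x - q‖ ^ 2 / (2 * t))) := by
      apply Tendsto.add
      · exact (hGcont.tendsto q).comp hq_tendsto
      · exact Tendsto.div (((tendsto_const_nhds.sub hq_tendsto).norm).pow 2) h2sk h2t
    have hRHS : Tendsto (fun k => G y + ‖x - y‖ ^ 2 / (2 * ns (φ k))) atTop
        (𝓝 (G y + ‖x - y‖ ^ 2 / (2 * t))) := by
      exact tendsto_const_nhds.add (tendsto_const_nhds.div h2sk h2t)
    exact le_of_tendsto_of_tendsto hLHS hRHS hle
  have hqP : q = P t := hPuniq t ht q hq_min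
  exact ⟨φ, hqP ▸ hq_tendsto⟩
end

section
/- For every fixed x ∈ ℝ^d, the function τ ↦ M_G^τ(x) is differentiable on (0, t_max), and its derivative satisfies ∂_t M_G^t(x) = −(1/(2t²))‖x − prox_{tG}(x)‖². -/
open Set Filter
open scoped Topology

/-- The Moreau envelope `M_G^t(x) = inf_y G(y) + ‖x - y‖² / (2t)`. -/
noncomputable def moreauEnv {d : ℕ} (G : EuclideanSpace ℝ (Fin d) → ℝ) (t : ℝ)
    (x : EuclideanSpace ℝ (Fin d)) : ℝ :=
  ⨅ y : EuclideanSpace ℝ (Fin d), (G y + ‖x - y‖ ^ 2 / (2 * t))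

/-- for every fixed `x`, the function `τ ↦ M_G^τ(x)` is differentiable on
`(0, t_max)` with derivative `∂_t M_G^t(x) = -(1/(2t²))‖x - prox_{tG}(x)‖²`. -/
theorem moreauEnv_hasDerivAt_time {d : ℕ}
    (G : EuclideanSpace ℝ (Fin d) → ℝ)
    (hGcont : Continuous G)
    (hGcoercive : ∀ r : ℝ, ∃ R : ℝ, ∀ y : EuclideanSpace ℝ (Fin d), R ≤ ‖y‖ → r ≤ G y)
    (hGbddBelow : ∃ m : ℝ, ∀ y : EuclideanSpace ℝ (Fin d), m ≤ G y)
    (tmax : ℝ) (htmax : 0 < tmax)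
    (x : EuclideanSpace ℝ (Fin d))
    (P : ℝ → EuclideanSpace ℝ (Fin d))
    (hPmin : ∀ t ∈ Set.Ioo (0 : ℝ) tmax, ∀ y : EuclideanSpace ℝ (Fin d),
      G (P t) + ‖x - P t‖ ^ 2 / (2 * t) ≤ G y + ‖x - y‖ ^ 2 / (2 * t))
    (hPuniq : ∀ t ∈ Set.Ioo (0 : ℝ) tmax, ∀ q : EuclideanSpace ℝ (Fin d),
      (∀ y : EuclideanSpace ℝ (Fin d),
        G q + ‖x - q‖ ^ 2 / (2 * t) ≤ G y + ‖x - y‖ ^ 2 / (2 * t)) → q = P t) :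
    ∀ t ∈ Set.Ioo (0 : ℝ) tmax,
      HasDerivAt (fun τ => moreauEnv G τ x) (-(1 / (2 * t ^ 2)) * ‖x - P t‖ ^ 2) t := by
  obtain ⟨m, hm⟩ := hGbddBelow
  intro t ht
  obtain ⟨ht0, htm⟩ := ht
  set M : ℝ → ℝ := fun s => moreauEnv G s x with hMdef
  set N : ℝ → ℝ := fun s => ‖x - P s‖ ^ 2 with hNdef
  have hIoo_mem : Set.Ioo (0 : ℝ) tmax ∈ 𝓝 t := isOpen_Ioo.mem_nhds ⟨ht0, htm⟩
  -- bounded below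
  have hbdd : ∀ s : ℝ, 0 < s →
      BddBelow (Set.range fun y : EuclideanSpace ℝ (Fin d) => G y + ‖x - y‖ ^ 2 / (2 * s)) := by
    intro s hs
    refine ⟨m, ?_⟩
    rintro _ ⟨y, rfl⟩
    have h1 : 0 ≤ ‖x - y‖ ^ 2 / (2 * s) := by positivity
    have := hm y
    linarith
  have hMle : ∀ s : ℝ, 0 < s → ∀ y, M s ≤ G y + ‖x - y‖ ^ 2 / (2 * s) :=
    fun s hs y => ciInf_le (hbdd s hs) y
  have hMeq : ∀ s ∈ Set.Ioo (0 : ℝ) tmax, M s = G (P s) + ‖x - P s‖ ^ 2 / (2 * s) := by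
    intro s hs
    exact le_antisymm (hMle s hs.1 (P s)) (le_ciInf (hPmin s hs))
  -- P s stays in a fixed closed ball
  set R : ℝ := Real.sqrt (2 * tmax * (G x - m)) with hRdef
  have hPball : ∀ s ∈ Set.Ioo (0 : ℝ) tmax, P s ∈ Metric.closedBall x R := by
    intro s hs
    have h1 := hPmin s hs x
    have hxx : ‖x - x‖ ^ 2 / (2 * s) = 0 := by simp
    have hs0 : 0 < s := hs.1
    have hGm : m ≤ G (P s) := hm (P s)
    have h2 : ‖x - P s‖ ^ 2 / (2 * s) ≤ G x - m := by linarith [hxx ▸ h1]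
    have h3 : ‖x - P s‖ ^ 2 ≤ 2 * s * (G x - m) := by
      have h2s : (0 : ℝ) < 2 * s := by linarith
      calc ‖x - P s‖ ^ 2 = ‖x - P s‖ ^ 2 / (2 * s) * (2 * s) := by field_simp
        _ ≤ (G x - m) * (2 * s) := by
            exact mul_le_mul_of_nonneg_right h2 h2s.le
        _ = 2 * s * (G x - m) := by ring
    have hGxm : 0 ≤ G x - m := by linarith [hm x]
    have h4 : ‖x - P s‖ ^ 2 ≤ 2 * tmax * (G x - m) := by
      have : 2 * s * (G x - m) ≤ 2 * tmax * (G x - m) := by nlinarith [hs.2]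
      linarith
    have h5 : ‖x - P s‖ ≤ R := by
      have := Real.sqrt_le_sqrt h4
      rwa [Real.sqrt_sq (norm_nonneg _)] at this
    simpa [Metric.mem_closedBall, dist_eq_norm, norm_sub_rev] using h5
  -- continuity of P at t (within Ioo)
  have hPt : Tendsto P (𝓝[Set.Ioo (0 : ℝ) tmax] t) (𝓝 (P t)) := by
    refine (isCompact_closedBall x R).tendsto_nhds_of_unique_mapClusterPt
      (eventually_mem_nhdsWithin.mono fun s hs => hPball s hs) ?_
    intro q hq hcl
    rw [mapClusterPt_iff_ultrafilter] at hcl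
    obtain ⟨U, hUle, hUP⟩ := hcl
    have hUt : Tendsto (fun s : ℝ => s) U (𝓝 t) :=
      (hUle.trans nhdsWithin_le_nhds : (U : Filter ℝ) ≤ 𝓝 t)
    have hIooU : ∀ᶠ s in (U : Filter ℝ), s ∈ Set.Ioo (0 : ℝ) tmax :=
      hUle self_mem_nhdsWithin
    refine hPuniq t ⟨ht0, htm⟩ q fun y => ?_
    have h2t : (0 : ℝ) < 2 * t := by linarith
    have key : 2 * t * G q + ‖x - q‖ ^ 2 ≤ 2 * t * G y + ‖x - y‖ ^ 2 := by
      have hnc : Continuous fun z : EuclideanSpace ℝ (Fin d) => ‖x - z‖ ^ 2 :=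
        (continuous_const.sub continuous_id).norm.pow 2
      have h1 : Tendsto (fun s => 2 * s * G (P s) + ‖x - P s‖ ^ 2) U
          (𝓝 (2 * t * G q + ‖x - q‖ ^ 2)) := by
        exact ((tendsto_const_nhds.mul hUt).mul ((hGcont.tendsto q).comp hUP)).add
          ((hnc.tendsto q).comp hUP)
      have h2 : Tendsto (fun s => 2 * s * G y + ‖x - y‖ ^ 2) U
          (𝓝 (2 * t * G y + ‖x - y‖ ^ 2)) := by
        exact ((tendsto_const_nhds.mul hUt).mul tendsto_const_nhds).add tendsto_const_nhds
      refine le_of_tendsto_of_tendsto h1 h2 ?_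
      filter_upwards [hIooU] with s hs
      have hs0 : 0 < s := hs.1
      have h2s : (0 : ℝ) < 2 * s := by linarith
      have h := hPmin s hs y
      calc 2 * s * G (P s) + ‖x - P s‖ ^ 2
          = 2 * s * (G (P s) + ‖x - P s‖ ^ 2 / (2 * s)) := by field_simp
        _ ≤ 2 * s * (G y + ‖x - y‖ ^ 2 / (2 * s)) := mul_le_mul_of_nonneg_left h h2s.le
        _ = 2 * s * G y + ‖x - y‖ ^ 2 := by field_simp
    have := (div_le_div_iff_of_pos_right h2t).2 key
    calc G q + ‖x - q‖ ^ 2 / (2 * t)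
        = (2 * t * G q + ‖x - q‖ ^ 2) / (2 * t) := by field_simp
      _ ≤ (2 * t * G y + ‖x - y‖ ^ 2) / (2 * t) := this
      _ = G y + ‖x - y‖ ^ 2 / (2 * t) := by field_simp
  -- restrict to punctured neighborhood
  have hle' : 𝓝[≠] t ≤ 𝓝[Set.Ioo (0 : ℝ) tmax] t :=
    nhdsWithin_le_of_mem (mem_nhdsWithin_of_mem_nhds hIoo_mem)
  have hNc : Continuous fun z : EuclideanSpace ℝ (Fin d) => ‖x - z‖ ^ 2 :=
    (continuous_const.sub continuous_id).norm.pow 2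
  have hNt : Tendsto N (𝓝[≠] t) (𝓝 (N t)) :=
    (((hNc.tendsto (P t)).comp hPt).mono_left hle')
  -- the comparison function g
  set g : ℝ → ℝ := fun s => -(N t) / (2 * s * t) with hgdef
  have hgt : Tendsto g (𝓝[≠] t) (𝓝 (-(1 / (2 * t ^ 2)) * N t)) := by
    have hden : (2 * t * t : ℝ) ≠ 0 := by positivity
    have hc : ContinuousAt g t := by
      apply ContinuousAt.div continuousAt_const
      · fun_prop
      · exact hden
    have : g t = -(1 / (2 * t ^ 2)) * N t := by
      simp only [hgdef]
      ring
    exact this ▸ hc.tendsto.mono_left nhdsWithin_le_nhds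
  -- the error term tends to 0
  set u : ℝ → ℝ := fun s => |N s - N t| / (2 * s * t) with hudef
  have hut : Tendsto u (𝓝[≠] t) (𝓝 0) := by
    have hnum : Tendsto (fun s => |N s - N t|) (𝓝[≠] t) (𝓝 0) := by
      have := (hNt.sub_const (N t)).abs
      simpa using this
    have hden : Tendsto (fun s : ℝ => 2 * s * t) (𝓝[≠] t) (𝓝 (2 * t * t)) := by
      apply Tendsto.mono_left _ nhdsWithin_le_nhds
      exact (tendsto_const_nhds.mul tendsto_id).mul tendsto_const_nhds
    have hden0 : (2 * t * t : ℝ) ≠ 0 := by positivity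
    have := hnum.div hden hden0
    simp only [zero_div] at this
    exact this
  -- eventual bound on |slope - g|
  have hbound : ∀ᶠ s in 𝓝[≠] t, ‖slope M t s - g s‖ ≤ u s := by
    filter_upwards [eventually_mem_nhdsWithin,
      (mem_nhdsWithin_of_mem_nhds hIoo_mem : Set.Ioo (0:ℝ) tmax ∈ 𝓝[≠] t)] with s hsne hs
    have hne : s ≠ t := hsne
    have hs0 : 0 < s := hs.1
    have hst0 : (0 : ℝ) < 2 * s * t := by positivity
    have hst : s - t ≠ 0 := sub_ne_zero.2 hne
    set D : ℝ := M s - M t with hDdef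
    set a : ℝ := N t * (t - s) / (2 * s * t) with hadef
    set b : ℝ := N s * (t - s) / (2 * s * t) with hbdef
    -- D ≤ a
    have hDa : D ≤ a := by
      have h1 := hMle s hs0 (P t)
      have h2 := hMeq t ⟨ht0, htm⟩
      have h3 : D ≤ N t / (2 * s) - N t / (2 * t) := by
        simp only [hDdef, hNdef]
        rw [h2]
        linarith
      have h4 : N t / (2 * s) - N t / (2 * t) = a := by
        simp only [hadef]
        field_simp
      linarith
    -- b ≤ D
    have hbD : b ≤ D := by
      have h1 := hMle t ht0 (P s)
      have h2 := hMeq s hs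
      have h3 : N s / (2 * s) - N s / (2 * t) ≤ D := by
        simp only [hDdef, hNdef]
        rw [h2]
        linarith
      have h4 : N s / (2 * s) - N s / (2 * t) = b := by
        simp only [hbdef]
        field_simp
      linarith
    have hslope : slope M t s - g s = (D - a) / (s - t) := by
      rw [slope_def_field]
      simp only [hDdef, hadef, hgdef]
      field_simp
      ring
    have hab : |D - a| ≤ |N s - N t| * |s - t| / (2 * s * t) := by
      have h1 : D - a ≤ 0 := by linarith
      rw [abs_of_nonpos h1]
      have h2 : a - b = (N t - N s) * (t - s) / (2 * s * t) := by
        simp only [hadef, hbdef]; ring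
      have h3 : (N t - N s) * (t - s) ≤ |N s - N t| * |s - t| := by
        calc (N t - N s) * (t - s) ≤ |(N t - N s) * (t - s)| := le_abs_self _
          _ = |N t - N s| * |t - s| := abs_mul _ _
          _ = |N s - N t| * |s - t| := by rw [abs_sub_comm (N t), abs_sub_comm t]
      calc -(D - a) = a - D := by ring
        _ ≤ a - b := by linarith
        _ = (N t - N s) * (t - s) / (2 * s * t) := h2
        _ ≤ |N s - N t| * |s - t| / (2 * s * t) := by
            exact (div_le_div_iff_of_pos_right hst0).2 h3
    rw [hslope, Real.norm_eq_abs, abs_div]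
    have habs : |s - t| > 0 := abs_pos.2 hst
    calc |D - a| / |s - t| ≤ (|N s - N t| * |s - t| / (2 * s * t)) / |s - t| := by
          exact (div_le_div_iff_of_pos_right habs).2 hab
      _ = |N s - N t| / (2 * s * t) := by
          field_simp
      _ = u s := rfl
  -- assemble
  rw [hasDerivAt_iff_tendsto_slope]
  have hdiff : Tendsto (fun s => slope M t s - g s) (𝓝[≠] t) (𝓝 0) :=
    squeeze_zero_norm' hbound hut
  have := hgt.add hdiff
  simp only [add_zero] at this
  exact this.congr fun s => by ring
end

section
/- At every point (x, t) with t ∈ (0, t_max) where x ↦ M_G^t(x) is differentiable, the Moreau envelope satisfies the Hamilton–Jacobi equation ∂_t M_G^t(x) + (1/2)‖∇_x M_G^t(x)‖² = 0. -/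
open Set Filter Topology

set_option maxHeartbeats 2000000 in
/-- at every point `(x, t)` with `t ∈ (0, t_max)` where `x ↦ M_G^t(x)` is
differentiable, the Moreau envelope satisfies the Hamilton–Jacobi equation
`∂_t M_G^t(x) + (1/2)‖∇_x M_G^t(x)‖² = 0` (in particular the time derivative exists). -/
theorem moreauEnv_hamilton_jacobi {d : ℕ}
    (G : EuclideanSpace ℝ (Fin d) → ℝ)
    (hGcont : Continuous G)
    (hGcoercive : ∀ r : ℝ, ∃ R : ℝ, ∀ y : EuclideanSpace ℝ (Fin d), R ≤ ‖y‖ → r ≤ G y)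
    (hGbddBelow : ∃ m : ℝ, ∀ y : EuclideanSpace ℝ (Fin d), m ≤ G y)
    (tmax : ℝ) (htmax : 0 < tmax)
    (hprox : ∀ t ∈ Set.Ioo (0 : ℝ) tmax, ∀ x : EuclideanSpace ℝ (Fin d),
      ∃! p : EuclideanSpace ℝ (Fin d), ∀ y : EuclideanSpace ℝ (Fin d),
        G p + ‖x - p‖ ^ 2 / (2 * t) ≤ G y + ‖x - y‖ ^ 2 / (2 * t)) :
    ∀ t ∈ Set.Ioo (0 : ℝ) tmax, ∀ x : EuclideanSpace ℝ (Fin d),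
      DifferentiableAt ℝ (fun z => moreauEnv G t z) x →
      HasDerivAt (fun τ => moreauEnv G τ x)
        (-(1 / 2) * ‖gradient (fun z => moreauEnv G t z) x‖ ^ 2) t := by
  intro t ht x hdiff
  obtain ⟨m, hm⟩ := hGbddBelow
  have ht0 : 0 < t := ht.1
  have ht0' : t ≠ 0 := ne_of_gt ht0
  -- boundedness below of the infimand
  have hbdd : ∀ (z : EuclideanSpace ℝ (Fin d)) (τ : ℝ), 0 < τ →
      BddBelow (Set.range fun y : EuclideanSpace ℝ (Fin d) => G y + ‖z - y‖ ^ 2 / (2 * τ)) := by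
    intro z τ hτ
    refine ⟨m, ?_⟩
    rintro _ ⟨y, rfl⟩
    have h0 : 0 ≤ ‖z - y‖ ^ 2 / (2 * τ) := by positivity
    linarith [hm y]
  -- the prox point
  have h1 : ∀ τ : ℝ, ∃ p : EuclideanSpace ℝ (Fin d), τ ∈ Set.Ioo (0:ℝ) tmax →
      (∀ y, G p + ‖x - p‖ ^ 2 / (2 * τ) ≤ G y + ‖x - y‖ ^ 2 / (2 * τ)) ∧
      ∀ q, (∀ y, G q + ‖x - q‖ ^ 2 / (2 * τ) ≤ G y + ‖x - y‖ ^ 2 / (2 * τ)) → q = p := by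
    intro τ
    by_cases h : τ ∈ Set.Ioo (0:ℝ) tmax
    · obtain ⟨p, hp1, hp2⟩ := hprox τ h x
      exact ⟨p, fun _ => ⟨hp1, fun q hq => hp2 q hq⟩⟩
    · exact ⟨0, fun hh => absurd hh h⟩
  choose P hP using h1
  have hmin : ∀ τ ∈ Set.Ioo (0:ℝ) tmax, ∀ y,
      G (P τ) + ‖x - P τ‖ ^ 2 / (2 * τ) ≤ G y + ‖x - y‖ ^ 2 / (2 * τ) :=
    fun τ h => (hP τ h).1
  have huniq : ∀ τ ∈ Set.Ioo (0:ℝ) tmax, ∀ q,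
      (∀ y, G q + ‖x - q‖ ^ 2 / (2 * τ) ≤ G y + ‖x - y‖ ^ 2 / (2 * τ)) → q = P τ :=
    fun τ h => (hP τ h).2
  -- value of the envelope
  have hval : ∀ τ ∈ Set.Ioo (0:ℝ) tmax,
      moreauEnv G τ x = G (P τ) + ‖x - P τ‖ ^ 2 / (2 * τ) := by
    intro τ h
    exact le_antisymm (ciInf_le (hbdd x τ h.1) _) (le_ciInf (hmin τ h))
  set N : ℝ → ℝ := fun s => ‖x - P s‖ ^ 2 with hNdef
  have hN0 : ∀ s, 0 ≤ N s := fun s => sq_nonneg _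
  -- monotonicity of N on (0, tmax)
  have hmono : ∀ s ∈ Set.Ioo (0:ℝ) tmax, ∀ u ∈ Set.Ioo (0:ℝ) tmax, s ≤ u → N s ≤ N u := by
    intro s hs u hu hsu
    rcases eq_or_lt_of_le hsu with rfl | hlt
    · exact le_refl _
    · have hs0 : (s:ℝ) ≠ 0 := ne_of_gt hs.1
      have hu0 : (u:ℝ) ≠ 0 := ne_of_gt hu.1
      have h1 := hmin s hs (P u)
      have h2 := hmin u hu (P s)
      have h3 : N s / (2*s) - N s / (2*u) ≤ N u / (2*s) - N u / (2*u) := by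
        simp only [hNdef]
        linarith
      have e : ∀ c : ℝ, c / (2*s) - c / (2*u) = c * ((u - s) / (2*s*u)) := by
        intro c
        field_simp
      rw [e, e] at h3
      have hk : 0 < (u - s) / (2*s*u) :=
        div_pos (by linarith) (mul_pos (mul_pos two_pos hs.1) hu.1)
      exact le_of_mul_le_mul_right h3 hk
  -- continuity of N at t (within (0, tmax))
  have hNcont : ∀ ε > (0:ℝ), ∃ δ > (0:ℝ), ∀ s ∈ Set.Ioo (0:ℝ) tmax,
      |s - t| < δ → |N s - N t| < ε := by
    by_contra hcon
    push_neg at hcon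
    obtain ⟨ε, hε, hseq⟩ := hcon
    set b : ℝ := (t + tmax) / 2 with hbdef
    have htb : t < b := by simp only [hbdef]; linarith [ht.2]
    have hb : b ∈ Set.Ioo (0:ℝ) tmax := ⟨by simp only [hbdef]; linarith [ht.1],
      by simp only [hbdef]; linarith [ht.2]⟩
    have hδpos : ∀ n : ℕ, 0 < min (1/((n:ℝ)+1)) (b - t) := by
      intro n
      exact lt_min (by positivity) (by linarith)
    choose s hs1 hs2 hs3 using fun n : ℕ => hseq _ (hδpos n)
    -- s n is bounded above by b, hence P (s n) lies in a fixed closed ball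
    have hsb : ∀ n, s n ≤ b := by
      intro n
      have h2 := lt_of_lt_of_le (hs2 n) (min_le_right _ _)
      have h3 := abs_lt.1 h2
      linarith [h3.2]
    have hPball : ∀ n, P (s n) ∈ Metric.closedBall x ‖x - P b‖ := by
      intro n
      have hNb : N (s n) ≤ N b := hmono _ (hs1 n) _ hb (hsb n)
      have h4 : ‖x - P (s n)‖ ≤ ‖x - P b‖ := by
        have h2 : ‖x - P (s n)‖ ^ 2 ≤ ‖x - P b‖ ^ 2 := hNb
        nlinarith [norm_nonneg (x - P (s n)), norm_nonneg (x - P b)]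
      simpa [Metric.mem_closedBall, dist_eq_norm, norm_sub_rev] using h4
    obtain ⟨q, hqK, φ, hφmono, hφtend⟩ :=
      (isCompact_closedBall x ‖x - P b‖).tendsto_subseq hPball
    -- s ∘ φ tends to t
    have hstend : Tendsto (fun n => s (φ n)) atTop (𝓝 t) := by
      rw [tendsto_iff_dist_tendsto_zero]
      apply squeeze_zero (g := fun n : ℕ => 1/((n:ℝ)+1)) (fun n => dist_nonneg)
      · intro n
        have h2 := lt_of_lt_of_le (hs2 (φ n)) (min_le_left _ _)
        have h3 : (1:ℝ)/((φ n : ℝ)+1) ≤ 1/((n:ℝ)+1) := by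
          apply one_div_le_one_div_of_le (by positivity)
          have h5 : n ≤ φ n := hφmono.le_apply
          exact_mod_cast Nat.add_le_add_right h5 1
        calc dist (s (φ n)) t = |s (φ n) - t| := Real.dist_eq _ _
          _ ≤ 1/((n:ℝ)+1) := le_trans (le_of_lt h2) h3
      · exact tendsto_one_div_add_atTop_nhds_zero_nat
    -- the limit q is a minimizer at t, hence q = P t
    have hcont2 : Continuous fun p : EuclideanSpace ℝ (Fin d) => ‖x - p‖ ^ 2 :=
      ((continuous_const.sub continuous_id).norm.pow 2)
    have hqmin : ∀ y, G q + ‖x - q‖ ^ 2 / (2 * t) ≤ G y + ‖x - y‖ ^ 2 / (2 * t) := by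
      intro y
      have hy : ∀ n, G (P (s (φ n))) + ‖x - P (s (φ n))‖ ^ 2 / (2 * s (φ n)) ≤
          G y + ‖x - y‖ ^ 2 / (2 * s (φ n)) := fun n => hmin _ (hs1 (φ n)) y
      have hden : Tendsto (fun n => 2 * s (φ n)) atTop (𝓝 (2 * t)) :=
        tendsto_const_nhds.mul hstend
      have hden' : (2:ℝ) * t ≠ 0 := by positivity
      have hL : Tendsto (fun n => G (P (s (φ n))) + ‖x - P (s (φ n))‖ ^ 2 / (2 * s (φ n)))
          atTop (𝓝 (G q + ‖x - q‖ ^ 2 / (2 * t))) :=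
        ((hGcont.tendsto q).comp hφtend).add
          (((hcont2.tendsto q).comp hφtend).div hden hden')
      have hR : Tendsto (fun n => G y + ‖x - y‖ ^ 2 / (2 * s (φ n)))
          atTop (𝓝 (G y + ‖x - y‖ ^ 2 / (2 * t))) :=
        tendsto_const_nhds.add (tendsto_const_nhds.div hden hden')
      exact le_of_tendsto_of_tendsto' hL hR hy
    have hqP : q = P t := huniq t ht q hqmin
    -- contradiction with ε ≤ |N (s (φ n)) - N t|
    have hNtend : Tendsto (fun n => N (s (φ n))) atTop (𝓝 (N t)) := by
      have h6 := (hcont2.tendsto q).comp hφtend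
      rw [hqP] at h6
      exact h6
    have h7 : Tendsto (fun n => |N (s (φ n)) - N t|) atTop (𝓝 0) := by
      have h8 := (hNtend.sub_const (N t)).abs
      simpa using h8
    obtain ⟨n, hn⟩ := (h7.eventually (eventually_lt_nhds hε)).exists
    exact absurd hn (not_lt.2 (hs3 (φ n)))
  -- continuity as a Tendsto statement
  have hIoo_mem : Set.Ioo (0:ℝ) tmax ∈ 𝓝 t := isOpen_Ioo.mem_nhds ht
  have hle : 𝓝[≠] t ≤ 𝓝[Set.Ioo (0:ℝ) tmax] t := by
    rw [nhdsWithin_restrict' _ hIoo_mem]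
    exact nhdsWithin_mono _ Set.inter_subset_right
  have hNt : Tendsto N (𝓝[Set.Ioo (0:ℝ) tmax] t) (𝓝 (N t)) := by
    rw [Metric.tendsto_nhdsWithin_nhds]
    intro ε hε
    obtain ⟨δ, hδ, h⟩ := hNcont ε hε
    exact ⟨δ, hδ, fun {s} hs hd => by
      rw [Real.dist_eq] at hd ⊢
      exact h s hs hd⟩
  -- the sandwich bound on slopes
  have hslope : ∀ s ∈ Set.Ioo (0:ℝ) tmax, s ≠ t →
      |slope (fun τ => moreauEnv G τ x) t s + N t / (2*s*t)| ≤ |N s - N t| * (1/(2*s*t)) := by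
    intro s hs hst
    have hs0 : 0 < s := hs.1
    have hs0' : s ≠ 0 := ne_of_gt hs0
    have hub : moreauEnv G s x - moreauEnv G t x ≤ N t * (1/(2*s) - 1/(2*t)) := by
      have h1 : moreauEnv G s x ≤ G (P t) + ‖x - P t‖ ^ 2 / (2 * s) :=
        ciInf_le (hbdd x s hs0) (P t)
      have h2 := hval t ht
      simp only [hNdef]
      have e : ‖x - P t‖^2 * (1/(2*s) - 1/(2*t)) = ‖x - P t‖^2/(2*s) - ‖x - P t‖^2/(2*t) := by
        field_simp
        try ring
      rw [e]
      linarith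
    have hlb : N s * (1/(2*s) - 1/(2*t)) ≤ moreauEnv G s x - moreauEnv G t x := by
      have h1 : moreauEnv G t x ≤ G (P s) + ‖x - P s‖ ^ 2 / (2 * t) :=
        ciInf_le (hbdd x t ht0) (P s)
      have h2 := hval s hs
      simp only [hNdef]
      have e : ‖x - P s‖^2 * (1/(2*s) - 1/(2*t)) = ‖x - P s‖^2/(2*s) - ‖x - P s‖^2/(2*t) := by
        field_simp
        try ring
      rw [e]
      linarith
    set A := moreauEnv G s x - moreauEnv G t x with hA
    have hslope_eq : slope (fun τ => moreauEnv G τ x) t s = A / (s - t) := by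
      simp only [slope_def_field, hA]
    rw [hslope_eq]
    have hc : (0:ℝ) < 2*s*t := mul_pos (mul_pos two_pos hs0) ht0
    have hc' : (2*s*t : ℝ) ≠ 0 := ne_of_gt hc
    have hub' : A * (2*s*t) ≤ N t * (t - s) := by
      have h9 := mul_le_mul_of_nonneg_right hub (le_of_lt hc)
      have e : N t * (1/(2*s) - 1/(2*t)) * (2*s*t) = N t * (t - s) := by
        field_simp
      linarith [e ▸ h9]
    have hlb' : N s * (t - s) ≤ A * (2*s*t) := by
      have h9 := mul_le_mul_of_nonneg_right hlb (le_of_lt hc)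
      have e : N s * (1/(2*s) - 1/(2*t)) * (2*s*t) = N s * (t - s) := by
        field_simp
      linarith [e ▸ h9]
    have hst0 : s - t ≠ 0 := sub_ne_zero.2 hst
    set B := A * (2*s*t) + N t * (s - t) with hB
    have hBle : B ≤ 0 := by simp only [hB]; linarith
    have hBge : (N t - N s) * (s - t) ≤ B := by
      simp only [hB]; nlinarith [hlb']
    have habsB : |B| ≤ |N s - N t| * |s - t| := by
      rw [abs_of_nonpos hBle]
      have h10 := neg_le_neg hBge
      have e3 : -((N t - N s) * (s - t)) = (N s - N t) * (s - t) := by ring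
      calc -B ≤ (N s - N t) * (s - t) := by rw [← e3]; exact h10
        _ ≤ |(N s - N t) * (s - t)| := le_abs_self _
        _ = |N s - N t| * |s - t| := abs_mul _ _
    have e2 : A / (s - t) + N t / (2*s*t) = B / ((s - t) * (2*s*t)) := by
      simp only [hB]
      field_simp
      try ring
    rw [e2, abs_div, abs_mul, abs_of_pos hc]
    have habs_st : 0 < |s - t| := abs_pos.2 hst0
    rw [div_le_iff₀ (mul_pos habs_st hc)]
    have e4 : |N s - N t| * (1/(2*s*t)) * (|s - t| * (2*s*t)) = |N s - N t| * |s - t| := by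
      field_simp
      try ring
    rw [e4]
    exact habsB
  -- limits of the bounding function
  have habs : Tendsto (fun s => |N s - N t|) (𝓝[≠] t) (𝓝 0) := by
    have h8 := ((hNt.mono_left hle).sub_const (N t)).abs
    simpa using h8
  have hden : Tendsto (fun s : ℝ => 2*s*t) (𝓝 t) (𝓝 (2*t^2)) := by
    have e : (2:ℝ)*t^2 = 2*t*t := by ring
    rw [e]
    exact (tendsto_const_nhds.mul tendsto_id).mul tendsto_const_nhds
  have ht2 : (0:ℝ) < 2*t^2 := by positivity
  have hinv : Tendsto (fun s : ℝ => 1/(2*s*t)) (𝓝[≠] t) (𝓝 (1/(2*t^2))) :=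
    (tendsto_const_nhds.div hden (ne_of_gt ht2)).mono_left nhdsWithin_le_nhds
  have hgtend : Tendsto
      (fun s => |N s - N t| * (1/(2*s*t)) + N t * |1/(2*s*t) - 1/(2*t^2)|)
      (𝓝[≠] t) (𝓝 0) := by
    have h1 := habs.mul hinv
    have h2 : Tendsto (fun s : ℝ => |1/(2*s*t) - 1/(2*t^2)|) (𝓝[≠] t) (𝓝 0) := by
      have h8 := (hinv.sub_const (1/(2*t^2))).abs
      simpa using h8
    have h3 := h2.const_mul (N t)
    have h4 := h1.add h3
    simpa using h4
  -- the time derivative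
  have hD : Tendsto (slope (fun τ => moreauEnv G τ x) t) (𝓝[≠] t)
      (𝓝 (-(N t)/(2*t^2))) := by
    rw [tendsto_iff_dist_tendsto_zero]
    apply squeeze_zero' (Eventually.of_forall fun s => dist_nonneg) _ hgtend
    filter_upwards [hle self_mem_nhdsWithin, self_mem_nhdsWithin] with s hsIoo hsne
    have hsne' : s ≠ t := hsne
    have hb := hslope s hsIoo hsne'
    rw [Real.dist_eq]
    have e : slope (fun τ => moreauEnv G τ x) t s - (-(N t)/(2*t^2)) =
        (slope (fun τ => moreauEnv G τ x) t s + N t/(2*s*t)) +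
        (N t/(2*t^2) - N t/(2*s*t)) := by ring
    calc |slope (fun τ => moreauEnv G τ x) t s - (-(N t)/(2*t^2))|
        ≤ |slope (fun τ => moreauEnv G τ x) t s + N t/(2*s*t)| +
          |N t/(2*t^2) - N t/(2*s*t)| := by rw [e]; exact abs_add_le _ _
      _ ≤ |N s - N t| * (1/(2*s*t)) + N t * |1/(2*s*t) - 1/(2*t^2)| := by
          refine add_le_add hb ?_
          have e5 : N t/(2*t^2) - N t/(2*s*t) = N t * (1/(2*t^2) - 1/(2*s*t)) := by ring
          rw [e5, abs_mul, abs_of_nonneg (hN0 t), abs_sub_comm]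
  have hderiv : HasDerivAt (fun τ => moreauEnv G τ x) (-(N t)/(2*t^2)) t :=
    hasDerivAt_iff_tendsto_slope.2 hD
  -- the gradient formula
  have h1' : HasFDerivAt (fun z : EuclideanSpace ℝ (Fin d) => ‖z - P t‖ ^ 2)
      (2 • (innerSL ℝ (x - P t))) x := by
    have h0 : HasFDerivAt (fun z : EuclideanSpace ℝ (Fin d) => z - P t)
        (ContinuousLinearMap.id ℝ _) x := (hasFDerivAt_id x).sub_const _
    simpa using h0.norm_sq
  have h2' : HasFDerivAt (fun z : EuclideanSpace ℝ (Fin d) =>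
      G (P t) + ‖z - P t‖ ^ 2 / (2*t))
      ((2*t)⁻¹ • (2 • (innerSL ℝ (x - P t)))) x := by
    have h9 := (h1'.const_smul ((2*t)⁻¹)).const_add (G (P t))
    have efun : (fun z : EuclideanSpace ℝ (Fin d) => G (P t) + (2*t)⁻¹ • ‖z - P t‖ ^ 2)
        = fun z : EuclideanSpace ℝ (Fin d) => G (P t) + ‖z - P t‖ ^ 2 / (2*t) := by
      funext z
      rw [smul_eq_mul, inv_mul_eq_div]
    simp only [Pi.smul_apply] at h9
    rw [efun] at h9
    exact h9
  have hmax : IsLocalMax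
      (fun z => moreauEnv G t z - (G (P t) + ‖z - P t‖ ^ 2 / (2*t))) x := by
    refine Filter.Eventually.of_forall fun z => ?_
    have hz : moreauEnv G t z ≤ G (P t) + ‖z - P t‖ ^ 2 / (2*t) :=
      ciInf_le (hbdd z t ht0) (P t)
    have hx := hval t ht
    simp only
    linarith
  have hfd0 := hmax.fderiv_eq_zero
  have hfM : fderiv ℝ (fun z => moreauEnv G t z) x
      = (2*t)⁻¹ • (2 • (innerSL ℝ (x - P t))) := by
    have hsub : fderiv ℝ (fun z => moreauEnv G t z - (G (P t) + ‖z - P t‖ ^ 2 / (2*t))) x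
        = fderiv ℝ (fun z => moreauEnv G t z) x - ((2*t)⁻¹ • (2 • (innerSL ℝ (x - P t)))) := by
      rw [fderiv_fun_sub hdiff h2'.differentiableAt, h2'.fderiv]
    rw [hsub] at hfd0
    exact sub_eq_zero.1 hfd0
  have hFD : HasFDerivAt (fun z => moreauEnv G t z)
      ((2*t)⁻¹ • (2 • (innerSL ℝ (x - P t)))) x := hfM ▸ hdiff.hasFDerivAt
  have hGr : HasGradientAt (fun z => moreauEnv G t z) (t⁻¹ • (x - P t)) x := by
    rw [hasGradientAt_iff_hasFDerivAt]
    refine hFD.congr_fderiv ?_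
    ext y
    simp only [InnerProductSpace.toDual_apply_apply, real_inner_smul_left,
      ContinuousLinearMap.smul_apply, innerSL_apply_apply, smul_eq_mul]
    field_simp
    ring
  have hgrad : gradient (fun z => moreauEnv G t z) x = t⁻¹ • (x - P t) := hGr.gradient
  rw [hgrad]
  have hnorm : ‖t⁻¹ • (x - P t)‖ ^ 2 = t⁻¹^2 * N t := by
    rw [norm_smul, mul_pow]
    simp only [hNdef]
    rw [Real.norm_eq_abs, abs_of_pos (inv_pos.2 ht0)]
  rw [hnorm]
  have efinal : -(1/2 : ℝ) * (t⁻¹^2 * N t) = -(N t)/(2*t^2) := by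
    field_simp
  rw [efinal]
  exact hderiv
end

section
/- There exists a constant C > 0 such that for all x ∈ ℝ^d and all 0 < s, t < t_max, |M_G^t(x) − M_G^s(x)| ≤ (|s − t|/2)(φ(‖x‖) + C)², where φ(s) := sup { ‖p‖ : ‖x‖ ≤ s, p ∈ ∂G(x) }. In particular, τ ↦ M_G^τ(x) is Lipschitz continuous on (0, t_max) for each fixed x. -/
open Set Filter

/-- The regular (Fréchet) subdifferential of `G` at `z`:
`p ∈ ∂G(z)` iff `G(y) ≥ G(z) + ⟨p, y - z⟩ + o(‖y - z‖)` as `y → z`. -/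
def regSubgrad {d : ℕ} (G : EuclideanSpace ℝ (Fin d) → ℝ) (z : EuclideanSpace ℝ (Fin d)) :
    Set (EuclideanSpace ℝ (Fin d)) :=
  {p | ∀ ε > (0 : ℝ), ∀ᶠ y in nhds z,
    G z + (inner ℝ p (y - z) : ℝ) - ε * ‖y - z‖ ≤ G y}

/-- `φ(s) := sup { ‖p‖ : ‖z‖ ≤ s, p ∈ ∂G(z) }`. -/
noncomputable def phiSup {d : ℕ} (G : EuclideanSpace ℝ (Fin d) → ℝ) (s : ℝ) : ℝ :=
  sSup {r : ℝ | ∃ z p : EuclideanSpace ℝ (Fin d), ‖z‖ ≤ s ∧ p ∈ regSubgrad G z ∧ r = ‖p‖}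

lemma moreauEnv_eq_prox {d : ℕ} {G : EuclideanSpace ℝ (Fin d) → ℝ} {t : ℝ}
    {x p : EuclideanSpace ℝ (Fin d)}
    (hp : ∀ y, G p + ‖x - p‖ ^ 2 / (2 * t) ≤ G y + ‖x - y‖ ^ 2 / (2 * t)) :
    moreauEnv G t x = G p + ‖x - p‖ ^ 2 / (2 * t) := by
  refine le_antisymm ?_ (le_ciInf hp)
  exact ciInf_le ⟨G p + ‖x - p‖ ^ 2 / (2 * t), by rintro r ⟨y, rfl⟩; exact hp y⟩ p

lemma moreauEnv_le {d : ℕ} {G : EuclideanSpace ℝ (Fin d) → ℝ} {t : ℝ}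
    {m : ℝ} (hm : ∀ y, m ≤ G y) (ht : 0 < t) (x y : EuclideanSpace ℝ (Fin d)) :
    moreauEnv G t x ≤ G y + ‖x - y‖ ^ 2 / (2 * t) := by
  refine ciInf_le ⟨m, ?_⟩ y
  rintro r ⟨z, rfl⟩
  have : (0:ℝ) ≤ ‖x - z‖ ^ 2 / (2 * t) := by positivity
  linarith [hm z]

lemma moreauEnv_anti {d : ℕ} {G : EuclideanSpace ℝ (Fin d) → ℝ} {a b : ℝ}
    {m : ℝ} (hm : ∀ y, m ≤ G y) (ha : 0 < a) (hab : a ≤ b) (x : EuclideanSpace ℝ (Fin d)) :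
    moreauEnv G b x ≤ moreauEnv G a x := by
  refine le_ciInf fun y => ?_
  refine le_trans (moreauEnv_le hm (lt_of_lt_of_le ha hab) x y) ?_
  have h2b : 0 < b := lt_of_lt_of_le ha hab
  gcongr ?_ + ‖x - y‖ ^ 2 / ?_ <;> linarith

lemma prox_subgrad {d : ℕ} {G : EuclideanSpace ℝ (Fin d) → ℝ} {t : ℝ}
    {x p : EuclideanSpace ℝ (Fin d)} (ht : 0 < t)
    (hp : ∀ y, G p + ‖x - p‖ ^ 2 / (2 * t) ≤ G y + ‖x - y‖ ^ 2 / (2 * t)) :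
    (t⁻¹ • (x - p)) ∈ regSubgrad G p := by
  intro ε hε
  have hmem : Metric.ball p (2 * t * ε) ∈ nhds p := Metric.ball_mem_nhds _ (by positivity)
  filter_upwards [hmem] with y hy
  have hdist : ‖y - p‖ < 2 * t * ε := by
    rw [Metric.mem_ball, dist_eq_norm] at hy; exact hy
  have expand : ‖x - y‖ ^ 2 = ‖x - p‖ ^ 2 - 2 * (inner ℝ (x - p) (y - p) : ℝ) + ‖y - p‖ ^ 2 := by
    have h1 : x - y = (x - p) - (y - p) := by abel
    rw [h1, norm_sub_sq_real]
  have hinner : (inner ℝ (t⁻¹ • (x - p)) (y - p) : ℝ) = t⁻¹ * (inner ℝ (x - p) (y - p) : ℝ) :=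
    real_inner_smul_left _ _ _
  have key := hp y
  have h3 : ‖y - p‖ ^ 2 / (2 * t) ≤ ε * ‖y - p‖ := by
    rw [div_le_iff₀ (by positivity)]
    nlinarith [norm_nonneg (y - p)]
  have h4 : ‖x - y‖ ^ 2 / (2 * t) =
      ‖x - p‖ ^ 2 / (2 * t) - t⁻¹ * (inner ℝ (x - p) (y - p) : ℝ) + ‖y - p‖ ^ 2 / (2 * t) := by
    rw [expand]; field_simp
  rw [hinner]
  linarith

lemma phiSup_nonneg {d : ℕ} (G : EuclideanSpace ℝ (Fin d) → ℝ) (s : ℝ) :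
    0 ≤ phiSup G s :=
  Real.sSup_nonneg (by rintro r ⟨z, p, _, _, rfl⟩; positivity)

lemma moreau_step {d : ℕ} {G : EuclideanSpace ℝ (Fin d) → ℝ} {a b : ℝ}
    {m : ℝ} (hm : ∀ y, m ≤ G y) (ha : 0 < a) (hab : a ≤ b)
    {x p : EuclideanSpace ℝ (Fin d)}
    (hp : ∀ y, G p + ‖x - p‖ ^ 2 / (2 * b) ≤ G y + ‖x - y‖ ^ 2 / (2 * b)) :
    moreauEnv G a x ≤ moreauEnv G b x + ‖x - p‖ ^ 2 * (b - a) / (2 * a * b) := by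
  have hb : 0 < b := lt_of_lt_of_le ha hab
  have h1 : moreauEnv G a x ≤ G p + ‖x - p‖ ^ 2 / (2 * a) := moreauEnv_le hm ha x p
  have h2 : moreauEnv G b x = G p + ‖x - p‖ ^ 2 / (2 * b) := moreauEnv_eq_prox hp
  have h3 : ‖x - p‖ ^ 2 / (2 * a) =
      ‖x - p‖ ^ 2 / (2 * b) + ‖x - p‖ ^ 2 * (b - a) / (2 * a * b) := by
    field_simp; ring
  linarith

set_option maxHeartbeats 2000000 in
/-- there exists `C > 0` such that for all `x` and all `0 < s, t < t_max`,
`|M_G^t(x) - M_G^s(x)| ≤ (|s - t|/2)(φ(‖x‖) + C)²`; in particular `τ ↦ M_G^τ(x)` is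
Lipschitz continuous on `(0, t_max)` for each fixed `x`. -/
theorem moreauEnv_time_lipschitz {d : ℕ}
    (G : EuclideanSpace ℝ (Fin d) → ℝ)
    (hGcont : Continuous G)
    (hGcoercive : ∀ r : ℝ, ∃ R : ℝ, ∀ y : EuclideanSpace ℝ (Fin d), R ≤ ‖y‖ → r ≤ G y)
    (hGbddBelow : ∃ m : ℝ, ∀ y : EuclideanSpace ℝ (Fin d), m ≤ G y)
    (hφbdd : ∀ s : ℝ, BddAbove
      {r : ℝ | ∃ z p : EuclideanSpace ℝ (Fin d), ‖z‖ ≤ s ∧ p ∈ regSubgrad G z ∧ r = ‖p‖})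
    (tmax : ℝ) (htmax : 0 < tmax)
    (hprox : ∀ t ∈ Set.Ioo (0 : ℝ) tmax, ∀ x : EuclideanSpace ℝ (Fin d),
      ∃! p : EuclideanSpace ℝ (Fin d), ∀ y : EuclideanSpace ℝ (Fin d),
        G p + ‖x - p‖ ^ 2 / (2 * t) ≤ G y + ‖x - y‖ ^ 2 / (2 * t))
    (K : ℝ) (hK : 0 < K)
    (hproxNorm : ∀ t : ℝ, 0 < t → ∀ x : EuclideanSpace ℝ (Fin d), K ≤ ‖x‖ →
      ∀ q : EuclideanSpace ℝ (Fin d),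
        (∀ y : EuclideanSpace ℝ (Fin d),
          G q + ‖x - q‖ ^ 2 / (2 * t) ≤ G y + ‖x - y‖ ^ 2 / (2 * t)) → ‖q‖ ≤ ‖x‖) :
    ∃ C > (0 : ℝ), ∀ x : EuclideanSpace ℝ (Fin d),
      ∀ s ∈ Set.Ioo (0 : ℝ) tmax, ∀ t ∈ Set.Ioo (0 : ℝ) tmax,
        |moreauEnv G t x - moreauEnv G s x| ≤ |s - t| / 2 * (phiSup G ‖x‖ + C) ^ 2 := by
  obtain ⟨m, hm⟩ := hGbddBelow
  obtain ⟨z0, hz0mem, hz0⟩ :=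
    (isCompact_closedBall (0 : EuclideanSpace ℝ (Fin d)) K).exists_isMaxOn
      ⟨0, Metric.mem_closedBall_self hK.le⟩ hGcont.continuousOn
  set B := G z0 with hB
  have hmB : m ≤ B := hm z0
  set R0 : ℝ := K + Real.sqrt (2 * tmax * (B - m)) with hR0
  set C0 : ℝ := phiSup G R0 with hC0
  have hC0n : 0 ≤ C0 := phiSup_nonneg G R0
  -- key bound : ‖x - prox_τ(x)‖ ≤ τ (φ(‖x‖) + C₀)
  have key : ∀ (x : EuclideanSpace ℝ (Fin d)) (τ : ℝ), τ ∈ Set.Ioo (0:ℝ) tmax →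
      ∀ p : EuclideanSpace ℝ (Fin d),
      (∀ y, G p + ‖x - p‖ ^ 2 / (2 * τ) ≤ G y + ‖x - y‖ ^ 2 / (2 * τ)) →
      ‖x - p‖ ≤ τ * (phiSup G ‖x‖ + C0) := by
    intro x τ hτ p hp
    have hq : (τ⁻¹ • (x - p)) ∈ regSubgrad G p := prox_subgrad hτ.1 hp
    set q := τ⁻¹ • (x - p) with hqdef
    have hxp : ‖x - p‖ = τ * ‖q‖ := by
      rw [hqdef, norm_smul, norm_inv, Real.norm_eq_abs, abs_of_pos hτ.1]
      rw [← mul_assoc, mul_inv_cancel₀ (ne_of_gt hτ.1), one_mul]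
    have hφx : 0 ≤ phiSup G ‖x‖ := phiSup_nonneg G _
    have hmain : ‖q‖ ≤ phiSup G ‖x‖ + C0 := by
      by_cases hx : K ≤ ‖x‖
      · have hpn : ‖p‖ ≤ ‖x‖ := hproxNorm τ hτ.1 x hx p hp
        have : ‖q‖ ≤ phiSup G ‖x‖ := le_csSup (hφbdd ‖x‖) ⟨p, q, hpn, hq, rfl⟩
        linarith
      · push_neg at hx
        have hGx : G x ≤ B :=
          hz0 (by simpa [Metric.mem_closedBall, dist_zero_right] using hx.le)
        have h1 : G p + ‖x - p‖ ^ 2 / (2 * τ) ≤ G x := by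
          have := hp x; simpa using this
        have h1' : ‖x - p‖ ^ 2 / (2 * τ) ≤ B - m := by linarith [hm p]
        have h2 : ‖x - p‖ ^ 2 ≤ 2 * tmax * (B - m) := by
          have h0 := (div_le_iff₀ (by linarith [hτ.1] : (0:ℝ) < 2 * τ)).1 h1'
          nlinarith [hτ.2.le, hτ.1.le, sub_nonneg.2 hmB]
        have h3 : ‖x - p‖ ≤ Real.sqrt (2 * tmax * (B - m)) := by
          calc ‖x - p‖ = Real.sqrt (‖x - p‖ ^ 2) := (Real.sqrt_sq (norm_nonneg _)).symm
          _ ≤ Real.sqrt (2 * tmax * (B - m)) := Real.sqrt_le_sqrt h2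
        have hpR : ‖p‖ ≤ R0 := by
          have h4 : ‖p‖ ≤ ‖x‖ + ‖x - p‖ := by
            calc ‖p‖ = ‖x - (x - p)‖ := by congr 1; abel
            _ ≤ ‖x‖ + ‖x - p‖ := norm_sub_le _ _
          rw [hR0]; linarith
        have : ‖q‖ ≤ C0 := le_csSup (hφbdd R0) ⟨p, q, hpR, hq, rfl⟩
        linarith
    rw [hxp]
    exact mul_le_mul_of_nonneg_left hmain hτ.1.le
  refine ⟨C0 + 1, by linarith, ?_⟩
  -- one-sided estimate
  have main : ∀ (x : EuclideanSpace ℝ (Fin d)) (s t : ℝ), s ∈ Set.Ioo (0:ℝ) tmax →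
      t ∈ Set.Ioo (0:ℝ) tmax → s ≤ t →
      moreauEnv G s x - moreauEnv G t x ≤ (t - s) / 2 * (phiSup G ‖x‖ + (C0 + 1)) ^ 2 := by
    intro x s t hs ht hst
    set L := phiSup G ‖x‖ + C0 with hLdef
    have hφx : 0 ≤ phiSup G ‖x‖ := phiSup_nonneg G _
    have hL0 : 0 ≤ L := by rw [hLdef]; linarith
    have hRHS : phiSup G ‖x‖ + (C0 + 1) = L + 1 := by rw [hLdef]; ring
    rw [hRHS]
    rcases eq_or_lt_of_le hst with rfl | hst'
    · simp
    · obtain ⟨n, hn⟩ := exists_nat_ge ((t - s) * L ^ 2 / (s * (2 * L + 1)))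
      set N : ℕ := max n 1 with hNdef
      have hN1 : 1 ≤ N := le_max_right _ _
      have hNpos : (0:ℝ) < (N:ℝ) := by exact_mod_cast lt_of_lt_of_le Nat.zero_lt_one hN1
      set h := (t - s) / (N:ℝ) with hhdef
      have hh : 0 < h := div_pos (by linarith) hNpos
      have hNh : (N:ℝ) * h = t - s := by
        rw [hhdef]; field_simp
      have hsL : (0:ℝ) < s * (2 * L + 1) := by
        have := hs.1; nlinarith
      have hkey : (t - s) * L ^ 2 ≤ (N:ℝ) * (s * (2 * L + 1)) := by
        have hn' : (t - s) * L ^ 2 / (s * (2 * L + 1)) ≤ (N:ℝ) := by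
          refine le_trans hn ?_; exact_mod_cast le_max_left n 1
        calc (t - s) * L ^ 2
            = ((t - s) * L ^ 2 / (s * (2 * L + 1))) * (s * (2 * L + 1)) := by
              rw [div_mul_cancel₀ _ hsL.ne']
          _ ≤ (N:ℝ) * (s * (2 * L + 1)) := mul_le_mul_of_nonneg_right hn' hsL.le
      have hL2h : L ^ 2 * h ≤ s * (2 * L + 1) := by
        rw [hhdef, ← mul_div_assoc, div_le_iff₀ hNpos]
        nlinarith [hkey]
      clear_value N h L
      set g : ℕ → ℝ := fun i => moreauEnv G (s + (i:ℝ) * h) x with hg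
      have tele : moreauEnv G s x - moreauEnv G t x = ∑ i ∈ Finset.range N, (g i - g (i+1)) := by
        rw [Finset.sum_range_sub' g N]
        have e0 : g 0 = moreauEnv G s x := by simp [hg]
        have e1 : g N = moreauEnv G t x := by
          have hts : s + (N:ℝ) * h = t := by rw [hNh]; ring
          simp only [hg]; rw [hts]
        rw [e0, e1]
      have hstep : ∀ i ∈ Finset.range N, g i - g (i+1) ≤ h * L ^ 2 * (s + h) / (2 * s) := by
        intro i hi
        rw [Finset.mem_range] at hi
        set a := s + (i:ℝ) * h with hadef
        set b := s + ((i:ℝ) + 1) * h with hbdef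
        have hia : 0 ≤ (i:ℝ) := Nat.cast_nonneg i
        have hsa : s ≤ a := by
          rw [hadef]; nlinarith [mul_nonneg hia hh.le]
        have ha : 0 < a := lt_of_lt_of_le hs.1 hsa
        have hba : b = a + h := by rw [hadef, hbdef]; ring
        have hab : a ≤ b := by rw [hba]; linarith
        have hbt : b ≤ t := by
          have hi1 : ((i:ℝ) + 1) ≤ (N:ℝ) := by exact_mod_cast hi
          rw [hbdef]
          nlinarith [hh.le]
        have hbIoo : b ∈ Set.Ioo (0:ℝ) tmax :=
          ⟨lt_of_lt_of_le ha hab, lt_of_le_of_lt hbt ht.2⟩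
        obtain ⟨p, hp, -⟩ := hprox b hbIoo x
        have h1 : g i - g (i+1) ≤ ‖x - p‖ ^ 2 * (b - a) / (2 * a * b) := by
          have e1 : g i = moreauEnv G a x := rfl
          have e2 : g (i+1) = moreauEnv G b x := by
            simp only [hg, hbdef]; push_cast; ring_nf
          rw [e1, e2]
          linarith [moreau_step hm ha hab hp]
        have hxp : ‖x - p‖ ≤ b * L := by rw [hLdef]; exact key x b hbIoo p hp
        have hxp2 : ‖x - p‖ ^ 2 ≤ (b * L) ^ 2 := by
          nlinarith [norm_nonneg (x - p)]
        have hba' : b - a = h := by rw [hba]; ring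
        have hb2 : 0 < b := lt_of_lt_of_le ha hab
        have hbs : b * s ≤ a * (s + h) := by
          nlinarith [mul_nonneg hh.le (sub_nonneg.2 hsa)]
        have hfin : ‖x - p‖ ^ 2 * (b - a) / (2 * a * b) ≤ h * L ^ 2 * (s + h) / (2 * s) := by
          rw [hba', div_le_div_iff₀ (by exact mul_pos (mul_pos two_pos ha) hb2)
            (by linarith [hs.1] : (0:ℝ) < 2 * s)]
          calc ‖x - p‖ ^ 2 * h * (2 * s)
              ≤ (b * L) ^ 2 * h * (2 * s) := by
                have hhs : (0:ℝ) ≤ h * (2 * s) := by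
                  have := hs.1; nlinarith [hh.le]
                nlinarith [mul_le_mul_of_nonneg_right hxp2 hhs]
            _ = (2 * h * L ^ 2 * b) * (b * s) := by ring
            _ ≤ (2 * h * L ^ 2 * b) * (a * (s + h)) := by
                refine mul_le_mul_of_nonneg_left hbs ?_
                have h2h : (0:ℝ) ≤ 2 * h := by linarith [hh.le]
                exact mul_nonneg (mul_nonneg h2h (sq_nonneg L)) hb2.le
            _ = h * L ^ 2 * (s + h) * (2 * a * b) := by ring
        linarith
      have hsum : moreauEnv G s x - moreauEnv G t x ≤ (N:ℝ) * (h * L ^ 2 * (s + h) / (2 * s)) := by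
        rw [tele]
        calc ∑ i ∈ Finset.range N, (g i - g (i+1))
            ≤ ∑ _i ∈ Finset.range N, (h * L ^ 2 * (s + h) / (2 * s)) :=
              Finset.sum_le_sum hstep
          _ = (N:ℝ) * (h * L ^ 2 * (s + h) / (2 * s)) := by
              rw [Finset.sum_const, Finset.card_range, nsmul_eq_mul]
      refine le_trans hsum ?_
      have e : (N:ℝ) * (h * L ^ 2 * (s + h) / (2 * s)) = ((N:ℝ) * h) * (L ^ 2 * (s + h)) / (2 * s) := by
        ring
      rw [e, hNh, div_le_iff₀ (by linarith [hs.1] : (0:ℝ) < 2 * s)]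
      have h5 : (t - s) * (L ^ 2 * h) ≤ (t - s) * (s * (2 * L + 1)) :=
        mul_le_mul_of_nonneg_left hL2h (by linarith)
      nlinarith [h5]
  intro x s hs t ht
  have hφx : 0 ≤ phiSup G ‖x‖ := phiSup_nonneg G _
  rcases le_total s t with hle | hle
  · have h1 : moreauEnv G t x ≤ moreauEnv G s x := moreauEnv_anti hm hs.1 hle x
    have h2 := main x s t hs ht hle
    rw [abs_of_nonpos (by linarith : moreauEnv G t x - moreauEnv G s x ≤ 0),
      abs_of_nonpos (by linarith : s - t ≤ 0)]
    have e : -(s - t) / 2 * (phiSup G ‖x‖ + (C0 + 1)) ^ 2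
        = (t - s) / 2 * (phiSup G ‖x‖ + (C0 + 1)) ^ 2 := by ring
    rw [e]
    linarith
  · have h1 : moreauEnv G s x ≤ moreauEnv G t x := moreauEnv_anti hm ht.1 hle x
    have h2 := main x t s ht hs hle
    rw [abs_of_nonneg (by linarith : (0:ℝ) ≤ moreauEnv G t x - moreauEnv G s x),
      abs_of_nonneg (by linarith : (0:ℝ) ≤ s - t)]
    linarith
end

section
/- The map τ ↦ Z_τ, where Z_τ := ∫_{ℝ^d} exp(−F(x) − M_G^τ(x)) dx, is Lipschitz continuous on (0, t_max). -/
open Set Filter MeasureTheory Real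

namespace NLAux

variable {d : ℕ}

local notation "E" => EuclideanSpace ℝ (Fin d)

lemma bdd_below_aux (G : E → ℝ) (m : ℝ) (hm : ∀ y, m ≤ G y) (t : ℝ) (ht : 0 < t) (x : E) :
    BddBelow (Set.range fun y : E => G y + ‖x - y‖ ^ 2 / (2 * t)) := by
  refine ⟨m, ?_⟩
  rintro _ ⟨y, rfl⟩
  have h1 : (0:ℝ) ≤ ‖x - y‖ ^ 2 / (2 * t) := by positivity
  have := hm y
  dsimp only
  linarith

lemma moreau_le (G : E → ℝ) (m : ℝ) (hm : ∀ y, m ≤ G y) (t : ℝ) (ht : 0 < t) (x y : E) :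
    moreauEnv G t x ≤ G y + ‖x - y‖ ^ 2 / (2 * t) :=
  ciInf_le (bdd_below_aux G m hm t ht x) y

lemma le_moreau (G : E → ℝ) (m : ℝ) (hm : ∀ y, m ≤ G y) (t : ℝ) (ht : 0 < t) (x : E) :
    m ≤ moreauEnv G t x := by
  refine le_ciInf fun y => ?_
  have h1 : (0:ℝ) ≤ ‖x - y‖ ^ 2 / (2 * t) := by positivity
  have := hm y
  linarith

lemma moreau_mono (G : E → ℝ) (m : ℝ) (hm : ∀ y, m ≤ G y) (s t : ℝ) (hs : 0 < s)
    (hst : s ≤ t) (x : E) : moreauEnv G t x ≤ moreauEnv G s x := by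
  have ht : 0 < t := lt_of_lt_of_le hs hst
  refine ciInf_mono (bdd_below_aux G m hm t ht x) fun y => ?_
  have : ‖x - y‖ ^ 2 / (2 * t) ≤ ‖x - y‖ ^ 2 / (2 * s) := by
    apply div_le_div_of_nonneg_left (by positivity) (by linarith) (by linarith)
  linarith

lemma measurable_moreau (G : E → ℝ) (hGcont : Continuous G) (m : ℝ) (hm : ∀ y, m ≤ G y)
    (t : ℝ) (ht : 0 < t) : Measurable (moreauEnv G t) := by
  apply measurable_of_Iio
  intro c
  have hset : (moreauEnv G t) ⁻¹' Set.Iio c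
      = ⋃ y : E, {x : E | G y + ‖x - y‖ ^ 2 / (2 * t) < c} := by
    ext x
    simp only [Set.mem_preimage, Set.mem_Iio, Set.mem_iUnion, Set.mem_setOf_eq]
    constructor
    · intro h
      exact exists_lt_of_ciInf_lt h
    · rintro ⟨y, hy⟩
      exact lt_of_le_of_lt (moreau_le G m hm t ht x y) hy
  rw [hset]
  refine IsOpen.measurableSet (isOpen_iUnion fun y => ?_)
  have hcont : Continuous fun x : E => G y + ‖x - y‖ ^ 2 / (2 * t) :=
    continuous_const.add (((continuous_id.sub continuous_const).norm.pow 2).div_const _)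
  exact isOpen_lt hcont continuous_const

lemma subgrad_of_min (G : E → ℝ) (t : ℝ) (ht : 0 < t) (x q : E)
    (hq : ∀ y, G q + ‖x - q‖ ^ 2 / (2 * t) ≤ G y + ‖x - y‖ ^ 2 / (2 * t)) :
    t⁻¹ • (x - q) ∈ regSubgrad G q := by
  intro ε hε
  filter_upwards [Metric.ball_mem_nhds q (by positivity : (0:ℝ) < 2 * t * ε)] with y hy
  have hyq : ‖y - q‖ < 2 * t * ε := by rwa [Metric.mem_ball, dist_eq_norm] at hy
  have hxy : ‖x - y‖ ^ 2
      = ‖x - q‖ ^ 2 - 2 * (inner ℝ (x - q) (y - q) : ℝ) + ‖y - q‖ ^ 2 := by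
    have hxy' : x - y = (x - q) - (y - q) := by abel
    rw [hxy', @norm_sub_sq_real]
  have hinner : (inner ℝ (t⁻¹ • (x - q)) (y - q) : ℝ)
      = t⁻¹ * (inner ℝ (x - q) (y - q) : ℝ) := real_inner_smul_left _ _ _
  have e1 := hq y
  rw [hxy] at e1
  have e2 : G y + (‖x - q‖ ^ 2 - 2 * (inner ℝ (x - q) (y - q) : ℝ) + ‖y - q‖ ^ 2) / (2 * t)
      = G y + ‖x - q‖ ^ 2 / (2 * t) - t⁻¹ * (inner ℝ (x - q) (y - q) : ℝ)
        + ‖y - q‖ ^ 2 / (2 * t) := by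
    field_simp
    ring
  rw [e2] at e1
  have key : ‖y - q‖ ^ 2 / (2 * t) ≤ ε * ‖y - q‖ := by
    rw [div_le_iff₀ (by positivity)]
    nlinarith [norm_nonneg (y - q)]
  rw [hinner]
  linarith

lemma phiSup_nonneg (G : E → ℝ) (s : ℝ) : 0 ≤ phiSup G s := by
  apply Real.sSup_nonneg
  rintro r ⟨z, p, -, -, rfl⟩
  exact norm_nonneg p

lemma step_bound (G : E → ℝ) (m : ℝ) (hm : ∀ y, m ≤ G y)
    (hφbdd : ∀ s : ℝ, BddAbove
      {r : ℝ | ∃ z p : E, ‖z‖ ≤ s ∧ p ∈ regSubgrad G z ∧ r = ‖p‖})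
    (R₀ s t : ℝ) (hs : 0 < s) (hst : s ≤ t) (ht2 : t ≤ 2 * s) (x q : E)
    (hq : ∀ y, G q + ‖x - q‖ ^ 2 / (2 * t) ≤ G y + ‖x - y‖ ^ 2 / (2 * t))
    (hqn : ‖q‖ ≤ max ‖x‖ R₀) :
    moreauEnv G s x - moreauEnv G t x ≤ phiSup G (max ‖x‖ R₀) ^ 2 * (t - s) := by
  have ht : 0 < t := lt_of_lt_of_le hs hst
  have hMt : G q + ‖x - q‖ ^ 2 / (2 * t) ≤ moreauEnv G t x := le_ciInf hq
  have hMs : moreauEnv G s x ≤ G q + ‖x - q‖ ^ 2 / (2 * s) := moreau_le G m hm s hs x q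
  set p := t⁻¹ • (x - q) with hp
  have hpmem : p ∈ regSubgrad G q := subgrad_of_min G t ht x q hq
  have hnormp : ‖x - q‖ = t * ‖p‖ := by
    rw [hp, norm_smul, norm_inv, Real.norm_eq_abs, abs_of_pos ht]
    field_simp
  have hple : ‖p‖ ≤ phiSup G (max ‖x‖ R₀) :=
    le_csSup (hφbdd _) ⟨q, p, hqn, hpmem, rfl⟩
  have hp0 : (0:ℝ) ≤ ‖p‖ := norm_nonneg _
  have h1 : moreauEnv G s x - moreauEnv G t x
      ≤ ‖x - q‖ ^ 2 / (2 * s) - ‖x - q‖ ^ 2 / (2 * t) := by linarith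
  have h2 : ‖x - q‖ ^ 2 / (2 * s) - ‖x - q‖ ^ 2 / (2 * t)
      = t ^ 2 * ‖p‖ ^ 2 * (t - s) / (2 * s * t) := by
    rw [hnormp]
    field_simp
  have h3 : t ^ 2 * ‖p‖ ^ 2 * (t - s) / (2 * s * t) ≤ ‖p‖ ^ 2 * (t - s) := by
    rw [div_le_iff₀ (by positivity)]
    nlinarith [mul_nonneg (mul_nonneg (sq_nonneg ‖p‖) (sub_nonneg.2 hst))
      (mul_nonneg ht.le (by linarith : (0:ℝ) ≤ 2 * s - t))]
  have h4 : ‖p‖ ^ 2 * (t - s) ≤ phiSup G (max ‖x‖ R₀) ^ 2 * (t - s) := by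
    apply mul_le_mul_of_nonneg_right _ (sub_nonneg.2 hst)
    exact pow_le_pow_left₀ hp0 hple 2
  linarith

lemma key_bound (G : E → ℝ) (m : ℝ) (hm : ∀ y, m ≤ G y)
    (hφbdd : ∀ s : ℝ, BddAbove
      {r : ℝ | ∃ z p : E, ‖z‖ ≤ s ∧ p ∈ regSubgrad G z ∧ r = ‖p‖})
    (tmax : ℝ)
    (hprox : ∀ t ∈ Set.Ioo (0 : ℝ) tmax, ∀ x : E,
      ∃! p : E, ∀ y : E, G p + ‖x - p‖ ^ 2 / (2 * t) ≤ G y + ‖x - y‖ ^ 2 / (2 * t))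
    (R₀ : ℝ)
    (hQ : ∀ u : ℝ, 0 < u → u < tmax → ∀ x q : E,
      (∀ y, G q + ‖x - q‖ ^ 2 / (2 * u) ≤ G y + ‖x - y‖ ^ 2 / (2 * u)) → ‖q‖ ≤ max ‖x‖ R₀) :
    ∀ n : ℕ, ∀ s t : ℝ, 0 < s → s ≤ t → t < tmax → t ≤ s * 2 ^ n → ∀ x : E,
      moreauEnv G s x - moreauEnv G t x ≤ phiSup G (max ‖x‖ R₀) ^ 2 * (t - s) := by
  intro n
  induction n with
  | zero =>
    intro s t hs hst htm h2 x
    have hts : t = s := le_antisymm (by simpa using h2) hst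
    subst hts
    simp
  | succ n ih =>
    intro s t hs hst htm h2 x
    have ht : 0 < t := lt_of_lt_of_le hs hst
    by_cases hc : t ≤ 2 * s
    · obtain ⟨q, hq, -⟩ := hprox t ⟨ht, htm⟩ x
      exact step_bound G m hm hφbdd R₀ s t hs hst hc x q hq (hQ t ht htm x q hq)
    · push_neg at hc
      set u := t / 2 with hu
      have hsu : s ≤ u := by rw [hu]; linarith
      have hut : u ≤ t := by rw [hu]; linarith
      have hu0 : 0 < u := by rw [hu]; linarith
      have hum : u < tmax := lt_of_le_of_lt hut htm
      have h2' : u ≤ s * 2 ^ n := by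
        rw [pow_succ, ← mul_assoc] at h2
        rw [hu]
        linarith
      have ha := ih s u hs hsu hum h2' x
      obtain ⟨q, hq, -⟩ := hprox t ⟨ht, htm⟩ x
      have hb := step_bound G m hm hφbdd R₀ u t hu0 hut (by rw [hu]; linarith) x q hq
        (hQ t ht htm x q hq)
      have hring : phiSup G (max ‖x‖ R₀) ^ 2 * (u - s) + phiSup G (max ‖x‖ R₀) ^ 2 * (t - u)
          = phiSup G (max ‖x‖ R₀) ^ 2 * (t - s) := by ring
      linarith

end NLAux

/-- the map `τ ↦ Z_τ = ∫ exp(-F(x) - M_G^τ(x)) dx` is Lipschitz continuous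
on `(0, t_max)`. -/
theorem normalization_lipschitz {d : ℕ}
    (F G : EuclideanSpace ℝ (Fin d) → ℝ)
    (hFbddBelow : ∃ m : ℝ, ∀ y : EuclideanSpace ℝ (Fin d), m ≤ F y)
    (hGbddBelow : ∃ m : ℝ, ∀ y : EuclideanSpace ℝ (Fin d), m ≤ G y)
    (hUint : Integrable (fun x : EuclideanSpace ℝ (Fin d) => Real.exp (-(F x + G x))))
    (hGcont : Continuous G)
    (hGcoercive : ∀ r : ℝ, ∃ R : ℝ, ∀ y : EuclideanSpace ℝ (Fin d), R ≤ ‖y‖ → r ≤ G y)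
    (hφbdd : ∀ s : ℝ, BddAbove
      {r : ℝ | ∃ z p : EuclideanSpace ℝ (Fin d), ‖z‖ ≤ s ∧ p ∈ regSubgrad G z ∧ r = ‖p‖})
    (tmax : ℝ) (htmax : 0 < tmax)
    (hprox : ∀ t ∈ Set.Ioo (0 : ℝ) tmax, ∀ x : EuclideanSpace ℝ (Fin d),
      ∃! p : EuclideanSpace ℝ (Fin d), ∀ y : EuclideanSpace ℝ (Fin d),
        G p + ‖x - p‖ ^ 2 / (2 * t) ≤ G y + ‖x - y‖ ^ 2 / (2 * t))
    (K : ℝ) (hK : 0 < K)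
    (hproxNorm : ∀ t : ℝ, 0 < t → ∀ x : EuclideanSpace ℝ (Fin d), K ≤ ‖x‖ →
      ∀ q : EuclideanSpace ℝ (Fin d),
        (∀ y : EuclideanSpace ℝ (Fin d),
          G q + ‖x - q‖ ^ 2 / (2 * t) ≤ G y + ‖x - y‖ ^ 2 / (2 * t)) → ‖q‖ ≤ ‖x‖)
    (hφint : Integrable (fun x : EuclideanSpace ℝ (Fin d) =>
      phiSup G ‖x‖ ^ 2 * Real.exp (-(F x + moreauEnv G tmax x)))) :
    ∃ L > (0 : ℝ), ∀ s ∈ Set.Ioo (0 : ℝ) tmax, ∀ t ∈ Set.Ioo (0 : ℝ) tmax,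
      |(∫ x : EuclideanSpace ℝ (Fin d), Real.exp (-(F x + moreauEnv G t x))) -
        (∫ x : EuclideanSpace ℝ (Fin d), Real.exp (-(F x + moreauEnv G s x)))| ≤
          L * |t - s| := by
  classical
  obtain ⟨mF, hmF⟩ := hFbddBelow
  obtain ⟨mG, hmG⟩ := hGbddBelow
  -- bound of G on the closed ball of radius K
  obtain ⟨x₀, -, hx₀⟩ := (isCompact_closedBall (0 : EuclideanSpace ℝ (Fin d)) K).exists_isMaxOn
    ⟨0, by simp [hK.le]⟩ hGcont.continuousOn
  set B := G x₀ with hB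
  obtain ⟨R₁, hR₁⟩ := hGcoercive (B + 1)
  set R₀ := max R₁ K with hR₀def
  -- the uniform bound on proximal points
  have hQ : ∀ u : ℝ, 0 < u → u < tmax → ∀ x q : EuclideanSpace ℝ (Fin d),
      (∀ y, G q + ‖x - q‖ ^ 2 / (2 * u) ≤ G y + ‖x - y‖ ^ 2 / (2 * u)) →
      ‖q‖ ≤ max ‖x‖ R₀ := by
    intro u hu _ x q hq
    by_cases hx : K ≤ ‖x‖
    · exact le_max_of_le_left (hproxNorm u hu x hx q hq)
    · push_neg at hx
      have h0 := hq x
      rw [sub_self, norm_zero] at h0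
      norm_num at h0
      have hnn : (0:ℝ) ≤ ‖x - q‖ ^ 2 / (2 * u) := by positivity
      have h1 : G q ≤ G x := by linarith
      have h2 : G x ≤ B := hx₀ (by simpa [Metric.mem_closedBall, dist_zero_right] using hx.le)
      by_contra hcon
      push_neg at hcon
      have hR₁q : R₁ ≤ ‖q‖ := by
        have : R₁ ≤ max ‖x‖ R₀ := le_trans (le_max_left R₁ K) (le_max_right ‖x‖ R₀)
        linarith
      have := hR₁ q hR₁q
      linarith
  -- the per-point key bound
  have key : ∀ s t : ℝ, 0 < s → s ≤ t → t < tmax → ∀ x : EuclideanSpace ℝ (Fin d),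
      moreauEnv G s x - moreauEnv G t x ≤ phiSup G (max ‖x‖ R₀) ^ 2 * (t - s) := by
    intro s t hs hst htm x
    obtain ⟨n, hn⟩ := pow_unbounded_of_one_lt (t / s) (one_lt_two (α := ℝ))
    refine NLAux.key_bound G mG hmG hφbdd tmax hprox R₀ hQ n s t hs hst htm ?_ x
    rw [div_lt_iff₀ hs] at hn
    nlinarith
  -- the integrable majorant
  set C := phiSup G R₀ ^ 2 * Real.exp (-(mF + mG)) with hCdef
  have hC0 : 0 ≤ C := mul_nonneg (sq_nonneg _) (Real.exp_pos _).le
  set Φ : EuclideanSpace ℝ (Fin d) → ℝ := fun x =>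
    phiSup G ‖x‖ ^ 2 * Real.exp (-(F x + moreauEnv G tmax x))
      + Set.indicator (Metric.closedBall 0 R₀) (fun _ => C) x with hΦdef
  have hΦint : Integrable Φ := by
    refine hφint.add ?_
    refine IntegrableOn.integrable_indicator ?_ measurableSet_closedBall
    refine integrableOn_const ?_
    exact measure_closedBall_lt_top.ne
  have hΦ0 : ∀ x, 0 ≤ Φ x := by
    intro x
    have h1 : (0:ℝ) ≤ phiSup G ‖x‖ ^ 2 * Real.exp (-(F x + moreauEnv G tmax x)) :=
      mul_nonneg (sq_nonneg _) (Real.exp_pos _).le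
    have h2 : (0:ℝ) ≤ Set.indicator (Metric.closedBall 0 R₀) (fun _ => C) x :=
      Set.indicator_nonneg (fun _ _ => hC0) x
    simp only [hΦdef]
    linarith
  have hmaj : ∀ x : EuclideanSpace ℝ (Fin d), phiSup G (max ‖x‖ R₀) ^ 2 * Real.exp (-(F x + moreauEnv G tmax x))
      ≤ Φ x := by
    intro x
    by_cases hx : ‖x‖ ≤ R₀
    · rw [max_eq_right hx]
      have hmem : x ∈ Metric.closedBall (0 : EuclideanSpace ℝ (Fin d)) R₀ := by
        simpa [Metric.mem_closedBall, dist_zero_right] using hx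
      have hind : Set.indicator (Metric.closedBall 0 R₀) (fun _ => C) x = C :=
        Set.indicator_of_mem hmem _
      have hexp : Real.exp (-(F x + moreauEnv G tmax x)) ≤ Real.exp (-(mF + mG)) := by
        apply Real.exp_le_exp.2
        have := hmF x
        have := NLAux.le_moreau G mG hmG tmax htmax x
        linarith
      have h1 : phiSup G R₀ ^ 2 * Real.exp (-(F x + moreauEnv G tmax x)) ≤ C := by
        rw [hCdef]
        exact mul_le_mul_of_nonneg_left hexp (sq_nonneg _)
      have h2 : (0:ℝ) ≤ phiSup G ‖x‖ ^ 2 * Real.exp (-(F x + moreauEnv G tmax x)) :=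
        mul_nonneg (sq_nonneg _) (Real.exp_pos _).le
      simp only [hΦdef, hind]
      linarith
    · push_neg at hx
      rw [max_eq_left hx.le]
      have h2 : (0:ℝ) ≤ Set.indicator (Metric.closedBall 0 R₀) (fun _ => C) x :=
        Set.indicator_nonneg (fun _ _ => hC0) x
      simp only [hΦdef]
      linarith
  -- the family of integrands
  set f : ℝ → EuclideanSpace ℝ (Fin d) → ℝ := fun u x => Real.exp (-(F x + moreauEnv G u x)) with hfdef
  have hmeas : ∀ u : ℝ, 0 < u → AEStronglyMeasurable (f u) volume := by
    intro u hu
    have h1 : Measurable (moreauEnv G u) := NLAux.measurable_moreau G hGcont mG hmG u hu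
    have heq : f u = fun x => Real.exp (-(F x + G x)) * Real.exp (G x - moreauEnv G u x) := by
      funext x
      rw [hfdef]
      dsimp only
      rw [← Real.exp_add]
      congr 1
      ring
    rw [heq]
    exact hUint.aestronglyMeasurable.mul ((hGcont.measurable.sub h1).exp).aestronglyMeasurable
  -- pointwise difference bound
  have hdiff : ∀ s t : ℝ, 0 < s → s ≤ t → t < tmax → ∀ x : EuclideanSpace ℝ (Fin d),
      |f t x - f s x| ≤ Φ x * (t - s) := by
    intro s t hs hst htm x
    have ht : 0 < t := lt_of_lt_of_le hs hst
    have hMst : moreauEnv G t x ≤ moreauEnv G s x := NLAux.moreau_mono G mG hmG s t hs hst x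
    have hMttmax : moreauEnv G tmax x ≤ moreauEnv G t x :=
      NLAux.moreau_mono G mG hmG t tmax ht htm.le x
    have hkey := key s t hs hst htm x
    have hfs_le : f s x ≤ f t x := by
      apply Real.exp_le_exp.2
      linarith
    rw [abs_of_nonneg (by linarith)]
    have e : f s x = f t x * Real.exp (-(moreauEnv G s x - moreauEnv G t x)) := by
      simp only [hfdef]
      rw [← Real.exp_add]
      congr 1
      ring
    have h1mu : 1 - Real.exp (-(moreauEnv G s x - moreauEnv G t x))
        ≤ moreauEnv G s x - moreauEnv G t x := by
      have := Real.add_one_le_exp (-(moreauEnv G s x - moreauEnv G t x))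
      linarith
    have hft0 : 0 ≤ f t x := (Real.exp_pos _).le
    have c1 : f t x - f s x = f t x * (1 - Real.exp (-(moreauEnv G s x - moreauEnv G t x))) := by
      rw [e]; ring
    have c2 : f t x * (1 - Real.exp (-(moreauEnv G s x - moreauEnv G t x)))
        ≤ f t x * (moreauEnv G s x - moreauEnv G t x) :=
      mul_le_mul_of_nonneg_left h1mu hft0
    have c3 : f t x * (moreauEnv G s x - moreauEnv G t x)
        ≤ Real.exp (-(F x + moreauEnv G tmax x)) * (phiSup G (max ‖x‖ R₀) ^ 2 * (t - s)) := by
      apply mul_le_mul (Real.exp_le_exp.2 (by linarith)) hkey (by linarith) (Real.exp_pos _).le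
    have c4 : Real.exp (-(F x + moreauEnv G tmax x)) * (phiSup G (max ‖x‖ R₀) ^ 2 * (t - s))
        ≤ Φ x * (t - s) := by
      rw [show Real.exp (-(F x + moreauEnv G tmax x)) * (phiSup G (max ‖x‖ R₀) ^ 2 * (t - s))
        = (phiSup G (max ‖x‖ R₀) ^ 2 * Real.exp (-(F x + moreauEnv G tmax x))) * (t - s) by ring]
      exact mul_le_mul_of_nonneg_right (hmaj x) (by linarith)
    linarith
  -- choose the Lipschitz constant
  refine ⟨(∫ x, Φ x) + 1, ?_, ?_⟩
  · have : 0 ≤ ∫ x, Φ x := integral_nonneg hΦ0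
    linarith
  suffices h : ∀ s ∈ Set.Ioo (0 : ℝ) tmax, ∀ t ∈ Set.Ioo (0 : ℝ) tmax, s ≤ t →
      |(∫ x, f t x) - ∫ x, f s x| ≤ ((∫ x, Φ x) + 1) * (t - s) by
    intro s hs t ht
    rcases le_total s t with hle | hle
    · rw [abs_of_nonneg (sub_nonneg.2 hle)]
      exact h s hs t ht hle
    · rw [abs_sub_comm, show |t - s| = s - t by rw [abs_sub_comm]; exact abs_of_nonneg (sub_nonneg.2 hle)]
      exact h t ht s hs hle
  intro s hs t ht hst
  have hIΦ : 0 ≤ ∫ x, Φ x := integral_nonneg hΦ0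
  have hint_diff : Integrable (fun x => f t x - f s x) := by
    apply Integrable.mono' (hΦint.mul_const (t - s)) ((hmeas t ht.1).sub (hmeas s hs.1))
    filter_upwards with x
    rw [Real.norm_eq_abs]
    exact hdiff s t hs.1 hst ht.2 x
  by_cases hfs : Integrable (f s)
  · have hft : Integrable (f t) := by
      have heq : f t = fun x => f s x + (f t x - f s x) := by funext x; ring
      rw [heq]
      exact hfs.add hint_diff
    rw [← integral_sub hft hfs]
    calc |∫ x, (f t x - f s x)| ≤ ∫ x, |f t x - f s x| := by
          simpa [Real.norm_eq_abs] using
            norm_integral_le_integral_norm (fun x => f t x - f s x)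
      _ ≤ ∫ x, Φ x * (t - s) :=
          integral_mono hint_diff.abs (hΦint.mul_const _) (fun x => hdiff s t hs.1 hst ht.2 x)
      _ = (∫ x, Φ x) * (t - s) := integral_mul_const _ _
      _ ≤ ((∫ x, Φ x) + 1) * (t - s) := by
          apply mul_le_mul_of_nonneg_right (by linarith) (by linarith)
  · have hft : ¬ Integrable (f t) := by
      intro h
      apply hfs
      have heq : f s = fun x => f t x - (f t x - f s x) := by funext x; ring
      rw [heq]
      exact h.sub hint_diff
    rw [integral_undef hfs, integral_undef hft]
    simp only [sub_zero, abs_zero]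
    have : 0 ≤ (t - s) := by linarith
    positivity
end

section
/- The curve of probability measures τ ↦ π^τ, where π^τ has density (1/Z_τ) exp(−U^τ(x)) with U^τ(x) := F(x) + M_G^τ(x) and Z_τ := ∫_{ℝ^d} exp(−U^τ(x)) dx, is Lipschitz continuous on (0, t_max) with respect to the total variation norm: there exists L > 0 such that ‖π^t − π^s‖_{TV} ≤ L|t − s| for all s, t ∈ (0, t_max). -/
open Set Filter MeasureTheory Real

/-- The potential `U^τ(x) := F(x) + M_G^τ(x)`. -/
noncomputable def potU {d : ℕ} (F G : EuclideanSpace ℝ (Fin d) → ℝ) (t : ℝ)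
    (x : EuclideanSpace ℝ (Fin d)) : ℝ :=
  F x + moreauEnv G t x

/-- The normalization constant `Z_τ := ∫ exp(-U^τ(x)) dx`. -/
noncomputable def normZ {d : ℕ} (F G : EuclideanSpace ℝ (Fin d) → ℝ) (t : ℝ) : ℝ :=
  ∫ x : EuclideanSpace ℝ (Fin d), Real.exp (-(potU F G t x))

/- ========================= auxiliary lemmas ========================= -/

section Aux

lemma aux_chain (h : ℝ → ℝ) (C : ℝ) (hC : 0 ≤ C) {s t : ℝ} (hs : 0 < s) (hst : s ≤ t)
    (hstep : ∀ u v, s ≤ u → u ≤ v → v ≤ t → h u - h v ≤ C * (v / u) * (v - u)) :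
    h s - h t ≤ C * (t - s) := by
  have key : ∀ r : ℝ, 1 < r → ∀ n : ℕ, ∀ u v, s ≤ u → u ≤ v → v ≤ t → v ≤ u * r ^ n →
      h u - h v ≤ C * r * (v - u) := by
    intro r hr n
    induction n with
    | zero =>
      intro u v hu huv hvt hpow
      have : v = u := le_antisymm (by simpa using hpow) huv
      simp [this]
    | succ n ih =>
      intro u v hu huv hvt hpow
      have hu0 : 0 < u := lt_of_lt_of_le hs hu
      have hv0 : 0 < v := lt_of_lt_of_le hu0 huv
      have hrn : (1:ℝ) ≤ r ^ n := one_le_pow₀ hr.le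
      by_cases hc : v ≤ u * r ^ n
      · exact ih u v hu huv hvt hc
      · set w : ℝ := max u (v / r) with hw
        have hw1 : u ≤ w := le_max_left _ _
        have hw2 : w ≤ v := by
          apply max_le huv
          rw [div_le_iff₀ (by linarith)]
          nlinarith
        have hw3 : w ≤ u * r ^ n := by
          apply max_le (by nlinarith)
          rw [div_le_iff₀ (by linarith)]
          calc v ≤ u * r ^ (n+1) := hpow
            _ = u * r ^ n * r := by ring
        have hvw : v ≤ w * r := by
          have : v / r ≤ w := le_max_right _ _
          rw [div_le_iff₀ (by linarith)] at this
          linarith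
        have h1 : h u - h w ≤ C * r * (w - u) := ih u w hu hw1 (le_trans hw2 hvt) hw3
        have h2 : h w - h v ≤ C * r * (v - w) := by
          have hst2 := hstep w v (le_trans hu hw1) hw2 hvt
          have hw0 : 0 < w := lt_of_lt_of_le hu0 hw1
          have : C * (v / w) * (v - w) ≤ C * r * (v - w) := by
            apply mul_le_mul_of_nonneg_right _ (by linarith)
            apply mul_le_mul_of_nonneg_left _ hC
            rw [div_le_iff₀ hw0]
            linarith [hvw]
          linarith
        linarith
  have key2 : ∀ r : ℝ, 1 < r → h s - h t ≤ C * r * (t - s) := by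
    intro r hr
    obtain ⟨n, hn⟩ := pow_unbounded_of_one_lt (t / s) hr
    exact key r hr n s t le_rfl hst le_rfl (by rw [← div_le_iff₀' hs] at *; linarith [hn.le])
  have hB : 0 ≤ C * (t - s) := mul_nonneg hC (by linarith)
  apply le_of_forall_pos_le_add
  intro ε hε
  have hr : (1:ℝ) < 1 + ε / (C * (t - s) + 1) := by
    have : 0 < ε / (C * (t - s) + 1) := div_pos hε (by linarith)
    linarith
  have := key2 _ hr
  have hfrac : C * (t - s) * (ε / (C * (t - s) + 1)) ≤ ε := by
    rw [mul_div_assoc']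
    rw [div_le_iff₀ (by linarith)]
    nlinarith
  nlinarith

variable {d : ℕ} {G : EuclideanSpace ℝ (Fin d) → ℝ} {m t : ℝ}

lemma moreau_bddBelow (hm : ∀ y, m ≤ G y) (ht : 0 < t) (x : EuclideanSpace ℝ (Fin d)) :
    BddBelow (Set.range fun y => G y + ‖x - y‖ ^ 2 / (2 * t)) := by
  refine ⟨m, ?_⟩
  rintro a ⟨y, rfl⟩
  have : 0 ≤ ‖x - y‖ ^ 2 / (2 * t) := by positivity
  linarith [hm y]

lemma moreau_le (hm : ∀ y, m ≤ G y) (ht : 0 < t) (x y : EuclideanSpace ℝ (Fin d)) :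
    moreauEnv G t x ≤ G y + ‖x - y‖ ^ 2 / (2 * t) :=
  ciInf_le (moreau_bddBelow hm ht x) y

lemma le_moreau {c : ℝ} {x : EuclideanSpace ℝ (Fin d)}
    (h : ∀ y, c ≤ G y + ‖x - y‖ ^ 2 / (2 * t)) : c ≤ moreauEnv G t x := le_ciInf h

lemma m_le_moreau (hm : ∀ y, m ≤ G y) (ht : 0 < t) (x : EuclideanSpace ℝ (Fin d)) :
    m ≤ moreauEnv G t x :=
  le_ciInf fun y => by
    have : 0 ≤ ‖x - y‖ ^ 2 / (2 * t) := by positivity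
    linarith [hm y]

lemma moreau_le_G (hm : ∀ y, m ≤ G y) (ht : 0 < t) (x : EuclideanSpace ℝ (Fin d)) :
    moreauEnv G t x ≤ G x := by
  have := moreau_le hm ht x x
  simpa using this

lemma moreau_antitone (hm : ∀ y, m ≤ G y) {t₁ t₂ : ℝ} (ht₁ : 0 < t₁) (ht₂ : t₁ ≤ t₂)
    (x : EuclideanSpace ℝ (Fin d)) : moreauEnv G t₂ x ≤ moreauEnv G t₁ x := by
  have ht₂0 : 0 < t₂ := lt_of_lt_of_le ht₁ ht₂
  apply le_ciInf
  intro y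
  refine le_trans (moreau_le hm ht₂0 x y) ?_
  have : ‖x - y‖ ^ 2 / (2 * t₂) ≤ ‖x - y‖ ^ 2 / (2 * t₁) := by
    apply div_le_div_of_nonneg_left (by positivity) (by linarith) (by linarith)
  linarith

lemma measurable_moreauEnv (hG : Continuous G) (hm : ∀ y, m ≤ G y) (ht : 0 < t) :
    Measurable (moreauEnv G t) := by
  classical
  set u : ℕ → EuclideanSpace ℝ (Fin d) := TopologicalSpace.denseSeq _ with hu
  have hdense : DenseRange u := TopologicalSpace.denseRange_denseSeq _
  set g : ℕ → EuclideanSpace ℝ (Fin d) → ℝ := fun n x => G (u n) + ‖x - u n‖ ^ 2 / (2 * t)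
    with hg
  have hgcont : ∀ n, Continuous (g n) := by
    intro n
    apply Continuous.add continuous_const
    exact ((continuous_id.sub continuous_const).norm.pow 2).div_const _
  set Fn : ℕ → EuclideanSpace ℝ (Fin d) → ℝ := fun n => Nat.rec (g 0)
    (fun k Fk => fun x => min (Fk x) (g (k+1) x)) n with hFn
  have hFcont : ∀ n, Continuous (Fn n) := by
    intro n
    induction n with
    | zero => exact hgcont 0
    | succ k ih => exact ih.min (hgcont (k+1))
  have hFle : ∀ n i, i ≤ n → ∀ x, Fn n x ≤ g i x := by
    intro n
    induction n with
    | zero => intro i hi x; interval_cases i; exact le_rfl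
    | succ k ih =>
      intro i hi x
      rcases Nat.lt_or_ge i (k+1) with h | h
      · exact le_trans (min_le_left _ _) (ih i (Nat.lt_succ_iff.mp h) x)
      · have : i = k + 1 := le_antisymm hi h
        subst this; exact min_le_right _ _
  have hFge : ∀ n x, moreauEnv G t x ≤ Fn n x := by
    intro n x
    induction n with
    | zero => exact ciInf_le (moreau_bddBelow hm ht x) (u 0)
    | succ k ih => exact le_min ih (ciInf_le (moreau_bddBelow hm ht x) (u (k+1)))
  have hanti : ∀ x, Antitone fun n => Fn n x := by
    intro x
    apply antitone_nat_of_succ_le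
    intro n
    exact min_le_left _ _
  have hlim : ∀ x, Tendsto (fun n => Fn n x) atTop (nhds (moreauEnv G t x)) := by
    intro x
    have hb : BddBelow (Set.range fun n => Fn n x) := by
      refine ⟨moreauEnv G t x, ?_⟩
      rintro a ⟨n, rfl⟩
      exact hFge n x
    have h1 : Tendsto (fun n => Fn n x) atTop (nhds (⨅ n, Fn n x)) :=
      tendsto_atTop_ciInf (hanti x) hb
    have h2 : (⨅ n, Fn n x) = moreauEnv G t x := by
      apply le_antisymm
      · apply le_of_forall_pos_le_add
        intro ε hε
        obtain ⟨y, hy⟩ : ∃ y, G y + ‖x - y‖ ^ 2 / (2 * t) < moreauEnv G t x + ε / 2 := by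
          by_contra hcon
          push_neg at hcon
          have : moreauEnv G t x + ε / 2 ≤ moreauEnv G t x := le_ciInf hcon
          linarith
        have hcont : ContinuousAt (fun z => G z + ‖x - z‖ ^ 2 / (2 * t)) y := by
          exact ((hG.add (((continuous_const.sub continuous_id).norm.pow 2).div_const _)).continuousAt)
        rw [Metric.continuousAt_iff] at hcont
        obtain ⟨δ, hδ, hball⟩ := hcont (ε/2) (by linarith)
        obtain ⟨n, hn⟩ := Metric.denseRange_iff.mp hdense y δ hδ
        have h5 : dist (g n x) (G y + ‖x - y‖ ^ 2 / (2 * t)) < ε / 2 := by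
          have := hball (show dist (u n) y < δ by simpa [dist_comm] using hn)
          simpa [hg] using this
        have h6 : g n x < G y + ‖x - y‖ ^ 2 / (2 * t) + ε / 2 := by
          have := abs_lt.mp (by simpa [Real.dist_eq] using h5)
          linarith [this.1, this.2]
        have hq1 : (⨅ k, Fn k x) ≤ g n x := le_trans (ciInf_le hb n) (hFle n n le_rfl x)
        have h7 : G y + ‖x - y‖ ^ 2 / (2 * t) + ε / 2 ≤ moreauEnv G t x + ε / 2 + ε / 2 := by linarith [hy.le]
        have h8 := h6.le.trans h7
        have h9 : moreauEnv G t x + ε / 2 + ε / 2 = moreauEnv G t x + ε := by ring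
        exact hq1.trans (h8.trans_eq h9)
      · exact le_ciInf fun n => hFge n x
    rwa [h2] at h1
  exact measurable_of_tendsto_metrizable (fun n => (hFcont n).measurable) (by
    rw [tendsto_pi_nhds]; exact fun x => hlim x)

lemma mem_regSubgrad_of_prox {v : ℝ} (hv : 0 < v) {x p : EuclideanSpace ℝ (Fin d)}
    (hp : ∀ y, G p + ‖x - p‖ ^ 2 / (2 * v) ≤ G y + ‖x - y‖ ^ 2 / (2 * v)) :
    (v⁻¹ • (x - p)) ∈ regSubgrad G p := by
  intro ε hε
  have hball : Metric.ball p (2 * v * ε) ∈ nhds p := Metric.ball_mem_nhds p (by positivity)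
  filter_upwards [hball] with y hy
  have hxy : ‖x - y‖ ^ 2 = ‖x - p‖ ^ 2 - 2 * (inner ℝ (x - p) (y - p) : ℝ) + ‖y - p‖ ^ 2 := by
    have : x - y = (x - p) - (y - p) := by abel
    rw [this, norm_sub_sq_real]
  have hinner : (inner ℝ (v⁻¹ • (x - p)) (y - p) : ℝ) = v⁻¹ * (inner ℝ (x - p) (y - p) : ℝ) :=
    real_inner_smul_left _ _ _
  have hpy := hp y
  have hd : dist y p < 2 * v * ε := hy
  rw [dist_eq_norm] at hd
  have hnn : (0:ℝ) ≤ ‖y - p‖ := norm_nonneg _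
  have key : ‖y - p‖ ^ 2 / (2 * v) ≤ ε * ‖y - p‖ := by
    rw [div_le_iff₀ (by positivity)]
    nlinarith
  have expand : G p + ‖x - p‖ ^ 2 / (2 * v) - (G p + (‖x - p‖ ^ 2 - 2 * (inner ℝ (x - p) (y - p) : ℝ) + ‖y - p‖ ^ 2) / (2 * v))
      = v⁻¹ * (inner ℝ (x - p) (y - p) : ℝ) - ‖y - p‖ ^ 2 / (2 * v) := by
    field_simp
    ring
  have h2 : G p + v⁻¹ * (inner ℝ (x - p) (y - p) : ℝ) - ‖y - p‖ ^ 2 / (2 * v) ≤ G y := by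
    have := hpy
    rw [hxy] at this
    linarith [this, expand]
  rw [hinner]
  linarith [key, h2]

end Aux

set_option maxHeartbeats 2000000 in
/-- the curve `τ ↦ π^τ` of probability densities
`x ↦ exp(-U^τ(x)) / Z_τ` is Lipschitz continuous on `(0, t_max)` with respect to the
total variation norm `‖p - q‖_TV = (1/2) ∫ |p(x) - q(x)| dx`. -/
theorem curve_lipschitz_TV {d : ℕ}
    (F G : EuclideanSpace ℝ (Fin d) → ℝ)
    (hFbddBelow : ∃ m : ℝ, ∀ y : EuclideanSpace ℝ (Fin d), m ≤ F y)
    (hGbddBelow : ∃ m : ℝ, ∀ y : EuclideanSpace ℝ (Fin d), m ≤ G y)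
    (hUint : Integrable (fun x : EuclideanSpace ℝ (Fin d) => Real.exp (-(F x + G x))))
    (hGcont : Continuous G)
    (hGcoercive : ∀ r : ℝ, ∃ R : ℝ, ∀ y : EuclideanSpace ℝ (Fin d), R ≤ ‖y‖ → r ≤ G y)
    (hφbdd : ∀ s : ℝ, BddAbove
      {r : ℝ | ∃ z p : EuclideanSpace ℝ (Fin d), ‖z‖ ≤ s ∧ p ∈ regSubgrad G z ∧ r = ‖p‖})
    (tmax : ℝ) (htmax : 0 < tmax)
    (hprox : ∀ t ∈ Set.Ioo (0 : ℝ) tmax, ∀ x : EuclideanSpace ℝ (Fin d),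
      ∃! p : EuclideanSpace ℝ (Fin d), ∀ y : EuclideanSpace ℝ (Fin d),
        G p + ‖x - p‖ ^ 2 / (2 * t) ≤ G y + ‖x - y‖ ^ 2 / (2 * t))
    (K : ℝ) (hK : 0 < K)
    (hproxNorm : ∀ t : ℝ, 0 < t → ∀ x : EuclideanSpace ℝ (Fin d), K ≤ ‖x‖ →
      ∀ q : EuclideanSpace ℝ (Fin d),
        (∀ y : EuclideanSpace ℝ (Fin d),
          G q + ‖x - q‖ ^ 2 / (2 * t) ≤ G y + ‖x - y‖ ^ 2 / (2 * t)) → ‖q‖ ≤ ‖x‖)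
    (hφint : Integrable (fun x : EuclideanSpace ℝ (Fin d) =>
      phiSup G ‖x‖ ^ 2 * Real.exp (-(F x + moreauEnv G tmax x)))) :
    ∃ L > (0 : ℝ), ∀ s ∈ Set.Ioo (0 : ℝ) tmax, ∀ t ∈ Set.Ioo (0 : ℝ) tmax,
      (1 / 2) * ∫ x : EuclideanSpace ℝ (Fin d),
        |Real.exp (-(potU F G t x)) / normZ F G t -
          Real.exp (-(potU F G s x)) / normZ F G s| ≤ L * |t - s| := by
  classical
  obtain ⟨mF, hmF⟩ := hFbddBelow
  obtain ⟨mG, hmG⟩ := hGbddBelow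
  -- bound of `G` on the closed ball of radius `K`
  obtain ⟨z₀, hz₀mem, hz₀max⟩ := (isCompact_closedBall (0 : EuclideanSpace ℝ (Fin d)) K).exists_isMaxOn
    ⟨0, by simp [hK.le]⟩ hGcont.continuousOn
  obtain ⟨R, hKR, hproxBall⟩ : ∃ R : ℝ, K ≤ R ∧ ∀ v : ℝ, 0 < v → v ≤ tmax →
      ∀ x p : EuclideanSpace ℝ (Fin d),
      (∀ y, G p + ‖x - p‖ ^ 2 / (2 * v) ≤ G y + ‖x - y‖ ^ 2 / (2 * v)) →
      ‖p‖ ≤ max ‖x‖ R := by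
    refine ⟨K + Real.sqrt (2 * tmax * (G z₀ - mG)), by
      have := Real.sqrt_nonneg (2 * tmax * (G z₀ - mG)); linarith, ?_⟩
    intro v hv hvt x p hp
    rcases le_or_gt K ‖x‖ with h | h
    · exact le_max_of_le_left (hproxNorm v hv x h p hp)
    · have hx := hp x
      simp only [sub_self, norm_zero] at hx
      have hGz : mG ≤ G z₀ := hmG z₀
      have hGx : G x ≤ G z₀ := hz₀max (by
        simp only [Set.mem_setOf_eq, Metric.mem_closedBall, dist_zero_right]
        exact h.le)
      have hdvnn : 0 ≤ ‖x - p‖ ^ 2 / (2 * v) := by positivity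
      have h2 : ‖x - p‖ ^ 2 / (2 * v) ≤ G z₀ - mG := by
        have := hmG p
        have h0 : (0:ℝ) ^ 2 / (2*v) = 0 := by simp
        rw [h0] at hx
        linarith
      have h1 : ‖x - p‖ ^ 2 ≤ 2 * v * (G z₀ - mG) := by
        rw [div_le_iff₀ (by positivity)] at h2
        linarith [h2]
      have h1' : ‖x - p‖ ^ 2 ≤ 2 * tmax * (G z₀ - mG) := by nlinarith
      have h2' : ‖x - p‖ ≤ Real.sqrt (2 * tmax * (G z₀ - mG)) := by
        rw [show (2 * tmax * (G z₀ - mG)) = Real.sqrt (2 * tmax * (G z₀ - mG)) ^ 2 from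
          (Real.sq_sqrt (by nlinarith)).symm] at h1'
        have hs := Real.sqrt_nonneg (2 * tmax * (G z₀ - mG))
        nlinarith [norm_nonneg (x - p)]
      have h3 : ‖p‖ ≤ ‖x‖ + ‖x - p‖ := by
        calc ‖p‖ = ‖x - (x - p)‖ := by congr 1; abel
          _ ≤ ‖x‖ + ‖x - p‖ := norm_sub_le _ _
      exact le_max_of_le_right (by linarith)
  -- the prox bundle
  have hproxF : ∀ v : ℝ, 0 < v → v < tmax → ∀ x : EuclideanSpace ℝ (Fin d),
      ∃ p : EuclideanSpace ℝ (Fin d),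
        (∀ y, G p + ‖x - p‖ ^ 2 / (2 * v) ≤ G y + ‖x - y‖ ^ 2 / (2 * v)) ∧
        moreauEnv G v x = G p + ‖x - p‖ ^ 2 / (2 * v) ∧
        ‖x - p‖ ≤ v * phiSup G (max ‖x‖ R) ∧ 0 ≤ phiSup G (max ‖x‖ R) := by
    intro v hv hvt x
    obtain ⟨p, hp, -⟩ := hprox v ⟨hv, hvt⟩ x
    have hq : (v⁻¹ • (x - p)) ∈ regSubgrad G p := mem_regSubgrad_of_prox hv hp
    have hpball : ‖p‖ ≤ max ‖x‖ R := hproxBall v hv hvt.le x p hp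
    have hle : ‖v⁻¹ • (x - p)‖ ≤ phiSup G (max ‖x‖ R) :=
      le_csSup (hφbdd _) ⟨p, v⁻¹ • (x - p), hpball, hq, rfl⟩
    have hnorm : ‖v⁻¹ • (x - p)‖ = v⁻¹ * ‖x - p‖ := by
      rw [norm_smul, norm_inv, Real.norm_eq_abs, abs_of_pos hv]
    refine ⟨p, hp, le_antisymm (moreau_le hmG hv x p) (le_moreau hp), ?_,
      le_trans (norm_nonneg _) hle⟩
    rw [hnorm] at hle
    calc ‖x - p‖ = v * (v⁻¹ * ‖x - p‖) := by field_simp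
      _ ≤ v * phiSup G (max ‖x‖ R) := mul_le_mul_of_nonneg_left hle hv.le
  have hΦ0 : ∀ x : EuclideanSpace ℝ (Fin d), 0 ≤ phiSup G (max ‖x‖ R) := by
    intro x
    obtain ⟨p, -, -, -, h⟩ := hproxF (tmax/2) (by linarith) (by linarith) x
    exact h
  -- key Lipschitz bound on the Moreau envelope in `t`
  have hkey : ∀ x : EuclideanSpace ℝ (Fin d), ∀ a b : ℝ, 0 < a → a ≤ b → b < tmax →
      moreauEnv G a x - moreauEnv G b x ≤ phiSup G (max ‖x‖ R) ^ 2 / 2 * (b - a) := by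
    intro x a b ha hab hb
    apply aux_chain (fun u => moreauEnv G u x) _ (by positivity) ha hab
    intro u v hu huv hvt
    have hu0 : 0 < u := lt_of_lt_of_le ha hu
    have hv0 : 0 < v := lt_of_lt_of_le hu0 huv
    obtain ⟨p, hp, heq, hnp, hphinn⟩ := hproxF v hv0 (lt_of_le_of_lt hvt hb) x
    have h1 : moreauEnv G u x ≤ G p + ‖x - p‖ ^ 2 / (2 * u) := moreau_le hmG hu0 x p
    have hN2 : ‖x - p‖ ^ 2 ≤ phiSup G (max ‖x‖ R) ^ 2 * v ^ 2 := by
      nlinarith [norm_nonneg (x - p), hnp]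
    have e1 : G p + ‖x - p‖ ^ 2 / (2 * u) - (G p + ‖x - p‖ ^ 2 / (2 * v))
        = ‖x - p‖ ^ 2 * ((v - u) / (2 * u * v)) := by field_simp; ring
    have e2 : phiSup G (max ‖x‖ R) ^ 2 / 2 * (v / u) * (v - u)
        = (phiSup G (max ‖x‖ R) ^ 2 * v ^ 2) * ((v - u) / (2 * u * v)) := by
      field_simp
    rw [heq]
    calc moreauEnv G u x - (G p + ‖x - p‖ ^ 2 / (2 * v))
        ≤ G p + ‖x - p‖ ^ 2 / (2 * u) - (G p + ‖x - p‖ ^ 2 / (2 * v)) := by linarith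
      _ = ‖x - p‖ ^ 2 * ((v - u) / (2 * u * v)) := e1
      _ ≤ (phiSup G (max ‖x‖ R) ^ 2 * v ^ 2) * ((v - u) / (2 * u * v)) :=
          mul_le_mul_of_nonneg_right hN2 (div_nonneg (by linarith) (by positivity))
      _ = _ := e2.symm
  -- bound on `G - M^t`
  have hGsub : ∀ x : EuclideanSpace ℝ (Fin d), ∀ b : ℝ, 0 < b → b < tmax →
      G x - moreauEnv G b x ≤ phiSup G (max ‖x‖ R) ^ 2 / 2 * b := by
    intro x b hb hbt
    apply le_of_forall_pos_le_add
    intro δ hδ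
    obtain ⟨η, hη, hcball⟩ := Metric.continuousAt_iff.mp hGcont.continuousAt δ hδ
    obtain ⟨a, ha0, hab, haB⟩ : ∃ a : ℝ, 0 < a ∧ a ≤ b ∧
        2 * a * (G x - mG + 1) ≤ η ^ 2 / 2 := by
      refine ⟨min (b/2) (η^2/(4*(G x - mG + 1))), ?_, ?_, ?_⟩
      · apply lt_min (by linarith)
        have : 0 < G x - mG + 1 := by linarith [hmG x]
        positivity
      · exact le_trans (min_le_left _ _) (by linarith)
      · have h1 : min (b/2) (η^2/(4*(G x - mG + 1))) ≤ η^2/(4*(G x - mG + 1)) :=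
          min_le_right _ _
        have h2 : 0 < G x - mG + 1 := by linarith [hmG x]
        rw [le_div_iff₀ (by positivity)] at h1
        nlinarith
    have hat : a < tmax := lt_of_le_of_lt hab hbt
    obtain ⟨p, hp, heq, hnp, hphinn⟩ := hproxF a ha0 hat x
    have h2 : ‖x - p‖ ^ 2 / (2 * a) ≤ G x - G p := by
      have hx := hp x
      simp only [sub_self, norm_zero] at hx
      have h0 : (0:ℝ) ^ 2 / (2*a) = 0 := by simp
      rw [h0] at hx
      linarith
    have h3 : ‖x - p‖ ^ 2 ≤ 2 * a * (G x - mG + 1) := by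
      rw [div_le_iff₀ (by positivity)] at h2
      have := hmG p
      nlinarith
    have h4 : ‖x - p‖ ^ 2 < η ^ 2 := by nlinarith
    have h5 : dist p x < η := by
      rw [dist_eq_norm, norm_sub_rev]
      by_contra hcon
      push_neg at hcon
      nlinarith [norm_nonneg (x - p)]
    have h6 := hcball h5
    rw [Real.dist_eq] at h6
    have habs := abs_lt.mp h6
    have h7 : G p ≤ moreauEnv G a x := by
      rw [heq]
      have : 0 ≤ ‖x - p‖ ^ 2 / (2 * a) := by positivity
      linarith
    have h8 := hkey x a b ha0 hab hbt
    have h9 : phiSup G (max ‖x‖ R) ^ 2 / 2 * (b - a) ≤ phiSup G (max ‖x‖ R) ^ 2 / 2 * b :=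
      mul_le_mul_of_nonneg_left (by linarith) (by positivity)
    linarith [habs.1, habs.2]
  -- measurability facts
  have hMmeas : ∀ b : ℝ, 0 < b → Measurable (moreauEnv G b) := fun b hb =>
    measurable_moreauEnv hGcont hmG hb
  have hfmeas : ∀ b : ℝ, 0 < b →
      AEStronglyMeasurable (fun x => Real.exp (-(F x + moreauEnv G b x))) volume := by
    intro b hb
    have hrw : (fun x : EuclideanSpace ℝ (Fin d) => Real.exp (-(F x + moreauEnv G b x)))
        = fun x => Real.exp (-(F x + G x)) * Real.exp (G x - moreauEnv G b x) := by
      funext x; rw [← Real.exp_add]; congr 1; ring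
    rw [hrw]
    exact (hUint.aestronglyMeasurable.aemeasurable.mul
      ((Real.measurable_exp.comp (hGcont.measurable.sub (hMmeas b hb))).aemeasurable)).aestronglyMeasurable
  have hphimono : Monotone (phiSup G) := by
    intro a b hab
    by_cases hS : {r : ℝ | ∃ z p : EuclideanSpace ℝ (Fin d),
        ‖z‖ ≤ a ∧ p ∈ regSubgrad G z ∧ r = ‖p‖}.Nonempty
    · apply csSup_le_csSup (hφbdd b) hS
      rintro r ⟨z, p, hz, hp, rfl⟩
      exact ⟨z, p, hz.trans hab, hp, rfl⟩
    · unfold phiSup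
      rw [Set.not_nonempty_iff_eq_empty.mp hS, Real.sSup_empty]
      by_cases hS2 : {r : ℝ | ∃ z p : EuclideanSpace ℝ (Fin d),
          ‖z‖ ≤ b ∧ p ∈ regSubgrad G z ∧ r = ‖p‖}.Nonempty
      · obtain ⟨r, z, p, hz, hp, rfl⟩ := hS2
        exact le_trans (norm_nonneg p) (le_csSup (hφbdd b) ⟨z, p, hz, hp, rfl⟩)
      · rw [Set.not_nonempty_iff_eq_empty.mp hS2, Real.sSup_empty]
  -- integrable indicator helper
  have hind : ∀ c : ℝ, Integrable
      ((Metric.closedBall (0 : EuclideanSpace ℝ (Fin d)) R).indicator (fun _ => c)) := by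
    intro c
    exact (integrableOn_const measure_closedBall_lt_top.ne).integrable_indicator
      measurableSet_closedBall
  -- integrability of exp(-U^t) for t ∈ (0, tmax)
  have hfint : ∀ b : ℝ, 0 < b → b < tmax →
      Integrable (fun x => Real.exp (-(F x + moreauEnv G b x))) := by
    intro b hb hbt
    apply Integrable.mono'
      (((hind (Real.exp (-(mF + mG)))).add hφint).add (hUint.const_mul (Real.exp (tmax/2))))
      (hfmeas b hb)
    apply Filter.Eventually.of_forall
    intro x
    rw [Real.norm_eq_abs, Real.abs_exp]
    simp only [Pi.add_apply]
    have hg2nn : 0 ≤ phiSup G ‖x‖ ^ 2 * Real.exp (-(F x + moreauEnv G tmax x)) := by positivity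
    have hg3nn : 0 ≤ Real.exp (tmax/2) * Real.exp (-(F x + G x)) := by positivity
    have hg1nn : 0 ≤ (Metric.closedBall (0 : EuclideanSpace ℝ (Fin d)) R).indicator
        (fun _ => Real.exp (-(mF + mG))) x :=
      Set.indicator_nonneg (fun _ _ => (Real.exp_pos _).le) x
    rcases le_or_gt ‖x‖ R with hxR | hxR
    · have h1 : Real.exp (-(F x + moreauEnv G b x)) ≤ Real.exp (-(mF + mG)) := by
        apply Real.exp_le_exp.mpr
        have := m_le_moreau hmG hb x
        have := hmF x
        linarith
      have h2 : (Metric.closedBall (0 : EuclideanSpace ℝ (Fin d)) R).indicator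
          (fun _ => Real.exp (-(mF + mG))) x = Real.exp (-(mF + mG)) :=
        Set.indicator_of_mem (mem_closedBall_zero_iff.mpr hxR) _
      linarith
    · rcases le_or_gt 1 (phiSup G ‖x‖) with hφ1 | hφ1
      · have h1 : Real.exp (-(F x + moreauEnv G b x)) ≤ Real.exp (-(F x + moreauEnv G tmax x)) := by
          apply Real.exp_le_exp.mpr
          have := moreau_antitone hmG hb hbt.le x
          linarith
        have h2 : Real.exp (-(F x + moreauEnv G tmax x))
            ≤ phiSup G ‖x‖ ^ 2 * Real.exp (-(F x + moreauEnv G tmax x)) :=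
          le_mul_of_one_le_left (Real.exp_pos _).le (one_le_pow₀ hφ1)
        linarith
      · have hmax : max ‖x‖ R = ‖x‖ := max_eq_left hxR.le
        have hφ0x : 0 ≤ phiSup G ‖x‖ := by have := hΦ0 x; rwa [hmax] at this
        have h3 : G x - moreauEnv G b x ≤ tmax / 2 := by
          have hG1 := hGsub x b hb hbt
          rw [hmax] at hG1
          have hsq : phiSup G ‖x‖ ^ 2 ≤ 1 := by nlinarith
          nlinarith [mul_nonneg (by nlinarith : (0:ℝ) ≤ 1 - phiSup G ‖x‖ ^ 2) hb.le]
        have h4 : Real.exp (-(F x + moreauEnv G b x))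
            ≤ Real.exp (tmax/2) * Real.exp (-(F x + G x)) := by
          rw [← Real.exp_add]
          apply Real.exp_le_exp.mpr
          linarith
        linarith
  -- integrability of Φ² ⋅ exp(-U^{tmax})
  have hg2meas : AEStronglyMeasurable (fun x : EuclideanSpace ℝ (Fin d) =>
      phiSup G (max ‖x‖ R) ^ 2 * Real.exp (-(F x + moreauEnv G tmax x))) volume := by
    have h1 : Measurable fun x : EuclideanSpace ℝ (Fin d) => phiSup G (max ‖x‖ R) :=
      hphimono.measurable.comp (continuous_norm.max continuous_const).measurable
    exact ((h1.pow_const 2).aemeasurable.mul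
      (hfmeas tmax htmax).aemeasurable).aestronglyMeasurable
  have hPhiInt : Integrable (fun x : EuclideanSpace ℝ (Fin d) =>
      phiSup G (max ‖x‖ R) ^ 2 * Real.exp (-(F x + moreauEnv G tmax x))) := by
    apply Integrable.mono'
      ((hind (phiSup G R ^ 2 * Real.exp (-(mF + mG)))).add hφint) hg2meas
    apply Filter.Eventually.of_forall
    intro x
    rw [Real.norm_eq_abs, abs_of_nonneg (by positivity)]
    simp only [Pi.add_apply]
    have hg2nn : 0 ≤ phiSup G ‖x‖ ^ 2 * Real.exp (-(F x + moreauEnv G tmax x)) := by positivity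
    rcases le_or_gt ‖x‖ R with hxR | hxR
    · have hmax : max ‖x‖ R = R := max_eq_right hxR
      rw [hmax]
      have h1 : Real.exp (-(F x + moreauEnv G tmax x)) ≤ Real.exp (-(mF + mG)) := by
        apply Real.exp_le_exp.mpr
        have := m_le_moreau hmG htmax x
        have := hmF x
        linarith
      have h2 : (Metric.closedBall (0 : EuclideanSpace ℝ (Fin d)) R).indicator
          (fun _ => phiSup G R ^ 2 * Real.exp (-(mF + mG))) x
          = phiSup G R ^ 2 * Real.exp (-(mF + mG)) :=
        Set.indicator_of_mem (mem_closedBall_zero_iff.mpr hxR) _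
      have h3 := mul_le_mul_of_nonneg_left h1 (sq_nonneg (phiSup G R))
      linarith
    · have hmax : max ‖x‖ R = ‖x‖ := max_eq_left hxR.le
      rw [hmax]
      have hg1nn : 0 ≤ (Metric.closedBall (0 : EuclideanSpace ℝ (Fin d)) R).indicator
          (fun _ => phiSup G R ^ 2 * Real.exp (-(mF + mG))) x :=
        Set.indicator_nonneg (fun _ _ => by positivity) x
      linarith
  -- Z-lower bound
  have hZ0pos : 0 < ∫ x : EuclideanSpace ℝ (Fin d), Real.exp (-(F x + G x)) := by
    rw [integral_pos_iff_support_of_nonneg (fun x => (Real.exp_pos _).le) hUint]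
    have hsupp : Function.support (fun x : EuclideanSpace ℝ (Fin d) =>
        Real.exp (-(F x + G x))) = Set.univ := by
      ext x; simp [Function.mem_support, (Real.exp_pos _).ne']
    rw [hsupp]
    exact isOpen_univ.measure_pos volume ⟨0, trivial⟩
  have hZge : ∀ b : ℝ, 0 < b → b < tmax →
      (∫ x : EuclideanSpace ℝ (Fin d), Real.exp (-(F x + G x)))
        ≤ ∫ x : EuclideanSpace ℝ (Fin d), Real.exp (-(F x + moreauEnv G b x)) := by
    intro b hb hbt
    apply integral_mono hUint (hfint b hb hbt)
    intro x
    apply Real.exp_le_exp.mpr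
    have := moreau_le_G hmG hb x
    linarith
  -- pointwise difference bound
  have hdiff : ∀ a b : ℝ, 0 < a → a ≤ b → b < tmax → ∀ x : EuclideanSpace ℝ (Fin d),
      Real.exp (-(F x + moreauEnv G b x)) - Real.exp (-(F x + moreauEnv G a x))
        ≤ (b - a) / 2 * (phiSup G (max ‖x‖ R) ^ 2 * Real.exp (-(F x + moreauEnv G tmax x))) := by
    intro a b ha hab hbt x
    have h1 : moreauEnv G b x ≤ moreauEnv G a x := moreau_antitone hmG ha hab x
    have h2 := hkey x a b ha hab hbt
    have h3 : Real.exp (-(F x + moreauEnv G b x)) ≤ Real.exp (-(F x + moreauEnv G tmax x)) := by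
      apply Real.exp_le_exp.mpr
      have := moreau_antitone hmG (lt_of_lt_of_le ha hab) hbt.le x
      linarith
    have h4 := Real.add_one_le_exp ((F x + moreauEnv G b x) - (F x + moreauEnv G a x))
    have h5 : Real.exp (-(F x + moreauEnv G a x))
        = Real.exp (-(F x + moreauEnv G b x))
          * Real.exp ((F x + moreauEnv G b x) - (F x + moreauEnv G a x)) := by
      rw [← Real.exp_add]; congr 1; ring
    have h6' := mul_le_mul_of_nonneg_left h4 (Real.exp_pos (-(F x + moreauEnv G b x))).le
    have h6 : Real.exp (-(F x + moreauEnv G b x)) - Real.exp (-(F x + moreauEnv G a x))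
        ≤ (moreauEnv G a x - moreauEnv G b x) * Real.exp (-(F x + moreauEnv G b x)) := by
      nlinarith [h6', h5]
    have h7 : (moreauEnv G a x - moreauEnv G b x) * Real.exp (-(F x + moreauEnv G b x))
        ≤ (phiSup G (max ‖x‖ R) ^ 2 / 2 * (b - a)) * Real.exp (-(F x + moreauEnv G tmax x)) :=
      mul_le_mul h2 h3 (Real.exp_pos _).le (mul_nonneg (by positivity) (by linarith))
    have h8 : (phiSup G (max ‖x‖ R) ^ 2 / 2 * (b - a)) * Real.exp (-(F x + moreauEnv G tmax x))
        = (b - a) / 2 * (phiSup G (max ‖x‖ R) ^ 2 * Real.exp (-(F x + moreauEnv G tmax x))) := by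
      ring
    linarith
  -- the main TV estimate, for a ≤ b
  have main : ∀ a b : ℝ, a ∈ Set.Ioo (0:ℝ) tmax → b ∈ Set.Ioo (0:ℝ) tmax → a ≤ b →
      (∫ x : EuclideanSpace ℝ (Fin d),
        |Real.exp (-(F x + moreauEnv G b x))
            / (∫ x : EuclideanSpace ℝ (Fin d), Real.exp (-(F x + moreauEnv G b x)))
          - Real.exp (-(F x + moreauEnv G a x))
            / (∫ x : EuclideanSpace ℝ (Fin d), Real.exp (-(F x + moreauEnv G a x)))|)
      ≤ (∫ x : EuclideanSpace ℝ (Fin d),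
            phiSup G (max ‖x‖ R) ^ 2 * Real.exp (-(F x + moreauEnv G tmax x)))
          / (∫ x : EuclideanSpace ℝ (Fin d), Real.exp (-(F x + G x))) * (b - a) := by
    intro a b hA hB hab
    have hIa := hfint a hA.1 hA.2
    have hIb := hfint b hB.1 hB.2
    obtain ⟨Za, hZa⟩ : ∃ z : ℝ,
        z = ∫ x : EuclideanSpace ℝ (Fin d), Real.exp (-(F x + moreauEnv G a x)) := ⟨_, rfl⟩
    obtain ⟨Zb, hZb⟩ : ∃ z : ℝ,
        z = ∫ x : EuclideanSpace ℝ (Fin d), Real.exp (-(F x + moreauEnv G b x)) := ⟨_, rfl⟩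
    obtain ⟨Z0, hZ0⟩ : ∃ z : ℝ,
        z = ∫ x : EuclideanSpace ℝ (Fin d), Real.exp (-(F x + G x)) := ⟨_, rfl⟩
    obtain ⟨Av, hAv⟩ : ∃ z : ℝ, z = ∫ x : EuclideanSpace ℝ (Fin d),
        phiSup G (max ‖x‖ R) ^ 2 * Real.exp (-(F x + moreauEnv G tmax x)) := ⟨_, rfl⟩
    rw [← hZa, ← hZb, ← hZ0, ← hAv]
    have hZ0p : 0 < Z0 := by rw [hZ0]; exact hZ0pos
    have hZap : Z0 ≤ Za := by rw [hZa, hZ0]; exact hZge a hA.1 hA.2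
    have hZbp : Z0 ≤ Zb := by rw [hZb, hZ0]; exact hZge b hB.1 hB.2
    have hZa0 : 0 < Za := lt_of_lt_of_le hZ0p hZap
    have hZb0 : 0 < Zb := lt_of_lt_of_le hZ0p hZbp
    have hAv0 : 0 ≤ Av := by
      rw [hAv]; exact integral_nonneg fun x => by positivity
    have hptmono : ∀ x : EuclideanSpace ℝ (Fin d),
        Real.exp (-(F x + moreauEnv G a x)) ≤ Real.exp (-(F x + moreauEnv G b x)) := by
      intro x
      apply Real.exp_le_exp.mpr
      have := moreau_antitone hmG hA.1 hab x
      linarith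
    have hZab : Za ≤ Zb := by
      rw [hZa, hZb]; exact integral_mono hIa hIb hptmono
    have hZdiff : Zb - Za ≤ (b - a) / 2 * Av := by
      have h1 : Zb - Za = ∫ x : EuclideanSpace ℝ (Fin d),
          (Real.exp (-(F x + moreauEnv G b x)) - Real.exp (-(F x + moreauEnv G a x))) := by
        rw [hZa, hZb, integral_sub hIb hIa]
      rw [h1]
      have h2 : (∫ x : EuclideanSpace ℝ (Fin d),
          (Real.exp (-(F x + moreauEnv G b x)) - Real.exp (-(F x + moreauEnv G a x))))
          ≤ ∫ x : EuclideanSpace ℝ (Fin d), (b - a) / 2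
              * (phiSup G (max ‖x‖ R) ^ 2 * Real.exp (-(F x + moreauEnv G tmax x))) :=
        integral_mono (hIb.sub hIa) (hPhiInt.const_mul _) (fun x => hdiff a b hA.1 hab hB.2 x)
      rwa [integral_const_mul, ← hAv] at h2
    -- pointwise bound on the TV integrand
    have hptwise : ∀ x : EuclideanSpace ℝ (Fin d),
        |Real.exp (-(F x + moreauEnv G b x)) / Zb - Real.exp (-(F x + moreauEnv G a x)) / Za|
        ≤ (Real.exp (-(F x + moreauEnv G b x)) - Real.exp (-(F x + moreauEnv G a x))) / Zb
          + Real.exp (-(F x + moreauEnv G a x)) * (1 / Za - 1 / Zb) := by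
      intro x
      have hea := Real.exp_pos (-(F x + moreauEnv G a x))
      have heb := hptmono x
      have hid : Real.exp (-(F x + moreauEnv G b x)) / Zb
            - Real.exp (-(F x + moreauEnv G a x)) / Za
          = (Real.exp (-(F x + moreauEnv G b x)) - Real.exp (-(F x + moreauEnv G a x))) / Zb
            + Real.exp (-(F x + moreauEnv G a x)) * (1 / Zb - 1 / Za) := by
        field_simp
        ring
      rw [hid]
      refine (abs_add_le _ _).trans ?_
      have hu : 0 ≤ (Real.exp (-(F x + moreauEnv G b x))
          - Real.exp (-(F x + moreauEnv G a x))) / Zb :=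
        div_nonneg (by linarith) hZb0.le
      have hw : Real.exp (-(F x + moreauEnv G a x)) * (1 / Zb - 1 / Za) ≤ 0 := by
        apply mul_nonpos_of_nonneg_of_nonpos hea.le
        have h1 : 1 / Zb ≤ 1 / Za := one_div_le_one_div_of_le hZa0 hZab
        linarith
      rw [abs_of_nonneg hu, abs_of_nonpos hw]
      have hrr : -(Real.exp (-(F x + moreauEnv G a x)) * (1 / Zb - 1 / Za))
          = Real.exp (-(F x + moreauEnv G a x)) * (1 / Za - 1 / Zb) := by ring
      linarith [hrr]
    have hLint : Integrable (fun x : EuclideanSpace ℝ (Fin d) =>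
        |Real.exp (-(F x + moreauEnv G b x)) / Zb
          - Real.exp (-(F x + moreauEnv G a x)) / Za|) :=
      ((hIb.div_const Zb).sub (hIa.div_const Za)).abs
    have hRint : Integrable (fun x : EuclideanSpace ℝ (Fin d) =>
        (Real.exp (-(F x + moreauEnv G b x)) - Real.exp (-(F x + moreauEnv G a x))) / Zb
          + Real.exp (-(F x + moreauEnv G a x)) * (1 / Za - 1 / Zb)) :=
      ((hIb.sub hIa).div_const Zb).add (hIa.mul_const _)
    have hmono := integral_mono hLint hRint hptwise
    have hcomp : (∫ x : EuclideanSpace ℝ (Fin d),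
        ((Real.exp (-(F x + moreauEnv G b x)) - Real.exp (-(F x + moreauEnv G a x))) / Zb
          + Real.exp (-(F x + moreauEnv G a x)) * (1 / Za - 1 / Zb)))
        = (Zb - Za) / Zb + Za * (1 / Za - 1 / Zb) := by
      have hIsub : Integrable (fun x : EuclideanSpace ℝ (Fin d) =>
          Real.exp (-(F x + moreauEnv G b x)) - Real.exp (-(F x + moreauEnv G a x))) volume :=
        hIb.sub hIa
      have hIsubd : Integrable (fun x : EuclideanSpace ℝ (Fin d) =>
          (Real.exp (-(F x + moreauEnv G b x)) - Real.exp (-(F x + moreauEnv G a x))) / Zb)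
          volume := hIsub.div_const Zb
      have hIamul : Integrable (fun x : EuclideanSpace ℝ (Fin d) =>
          Real.exp (-(F x + moreauEnv G a x)) * (1 / Za - 1 / Zb)) volume := hIa.mul_const _
      rw [integral_add hIsubd hIamul]
      rw [integral_div]
      rw [integral_sub hIb hIa]
      rw [integral_mul_const]
      rw [← hZa, ← hZb]
    rw [hcomp] at hmono
    have hsum : (Zb - Za) / Zb + Za * (1 / Za - 1 / Zb) = 2 * ((Zb - Za) / Zb) := by
      field_simp
      ring
    rw [hsum] at hmono
    have hstep1 : (Zb - Za) / Zb ≤ (Zb - Za) / Z0 := by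
      rw [div_le_div_iff₀ hZb0 hZ0p]
      nlinarith
    have hstep2 : (Zb - Za) / Z0 ≤ ((b - a) / 2 * Av) / Z0 := by
      rw [div_le_div_iff₀ hZ0p hZ0p]
      nlinarith
    have heq2 : 2 * (((b - a) / 2 * Av) / Z0) = Av / Z0 * (b - a) := by ring
    linarith
  -- final assembly
  have hAint0 : 0 ≤ ∫ x : EuclideanSpace ℝ (Fin d),
      phiSup G (max ‖x‖ R) ^ 2 * Real.exp (-(F x + moreauEnv G tmax x)) :=
    integral_nonneg fun x => by positivity
  have hAZ : 0 ≤ (∫ x : EuclideanSpace ℝ (Fin d),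
      phiSup G (max ‖x‖ R) ^ 2 * Real.exp (-(F x + moreauEnv G tmax x)))
      / (∫ x : EuclideanSpace ℝ (Fin d), Real.exp (-(F x + G x))) :=
    div_nonneg hAint0 hZ0pos.le
  refine ⟨(∫ x : EuclideanSpace ℝ (Fin d),
      phiSup G (max ‖x‖ R) ^ 2 * Real.exp (-(F x + moreauEnv G tmax x)))
      / (∫ x : EuclideanSpace ℝ (Fin d), Real.exp (-(F x + G x))) + 1,
    add_pos_of_nonneg_of_pos hAZ one_pos, ?_⟩
  intro s hs t ht
  simp only [normZ, potU]
  rcases le_total s t with hst | hts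
  · have h := main s t hs ht hst
    rw [abs_of_nonneg (by linarith : (0:ℝ) ≤ t - s)]
    nlinarith [h, mul_nonneg hAZ (sub_nonneg.mpr hst)]
  · have h := main t s ht hs hts
    have hswap : (∫ x : EuclideanSpace ℝ (Fin d),
        |Real.exp (-(F x + moreauEnv G t x))
            / (∫ x : EuclideanSpace ℝ (Fin d), Real.exp (-(F x + moreauEnv G t x)))
          - Real.exp (-(F x + moreauEnv G s x))
            / (∫ x : EuclideanSpace ℝ (Fin d), Real.exp (-(F x + moreauEnv G s x)))|)
        = ∫ x : EuclideanSpace ℝ (Fin d),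
        |Real.exp (-(F x + moreauEnv G s x))
            / (∫ x : EuclideanSpace ℝ (Fin d), Real.exp (-(F x + moreauEnv G s x)))
          - Real.exp (-(F x + moreauEnv G t x))
            / (∫ x : EuclideanSpace ℝ (Fin d), Real.exp (-(F x + moreauEnv G t x)))| :=
      integral_congr_ae (Filter.Eventually.of_forall fun x => abs_sub_comm _ _)
    rw [hswap, abs_sub_comm, abs_of_nonneg (by linarith : (0:ℝ) ≤ s - t)]
    nlinarith [h, mul_nonneg hAZ (sub_nonneg.mpr hts)]
end
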